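/- arXiv:2212.14151 — 5 statements merged into one kernel-verified Lean document; each statement's English description precedes it below -/
import Mathlib

section
/- Let (W,S) be a folding of a Coxeter system (W',S') via a diagram automorphism φ whose orbits on S' consist of pairwise commuting elements. Then every reflection t of W (with respect to the generating set S of products of φ-orbits) is equal to the product of a φ-orbit of reflections in W'. -/
/-- The subgroup of elements of `G` fixed by an automorphism `φ`. -/
def fixedSubgroup {G : Type*} [Group G] (φ : G ≃* G) : Subgroup G where
  carrier := {w | φ w = w}
  one_mem' := map_one φ
  mul_mem' := by
    intro a b ha hb
    simp only [Set.mem_setOf_eq] at *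
    rw [map_mul, ha, hb]
  inv_mem' := by
    intro a ha
    simp only [Set.mem_setOf_eq] at *
    rw [map_inv, ha]

/-- The product of the simple reflections of `W'` lying in the `σ`-orbit of the index `i`
(well defined because the elements of each orbit commute pairwise). -/
noncomputable def orbProd {B' W' : Type*} [Group W'] [Fintype B'] [DecidableEq B']
    {M' : CoxeterMatrix B'} (cs' : CoxeterSystem M' W') (σ : Equiv.Perm B')
    (hcomm : ∀ (i : B') (k k' : ℕ),
      Commute (cs'.simple ((σ ^ k) i)) (cs'.simple ((σ ^ k') i)))
    (i : B') : W' :=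
  letI := Classical.decPred fun j : B' => ∃ k : ℕ, (σ ^ k) i = j
  (Finset.univ.filter fun j : B' => ∃ k : ℕ, (σ ^ k) i = j).noncommProd cs'.simple (by
    intro x hx y hy _
    rw [Finset.mem_coe, Finset.mem_filter] at hx hy
    obtain ⟨k, hk⟩ := hx.2
    obtain ⟨k', hk'⟩ := hy.2
    rw [← hk, ← hk']
    exact hcomm i k k')


private lemma list_pairwise_commute_simple {B' W' : Type*} [Group W'] [Fintype B'] [DecidableEq B']
    {M' : CoxeterMatrix B'} (cs' : CoxeterSystem M' W') (σ : Equiv.Perm B') (i : B')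
    (hcomm : ∀ (i : B') (k k' : ℕ),
      Commute (cs'.simple ((σ ^ k) i)) (cs'.simple ((σ ^ k') i)))
    (l : List ℕ) :
    (l.map fun p => cs'.simple ((σ ^ p) i)).Pairwise Commute := by
  induction l with
  | nil => simp
  | cons a l ih =>
    rw [List.map_cons, List.pairwise_cons]
    refine ⟨?_, ih⟩
    rintro x hx
    rw [List.mem_map] at hx
    obtain ⟨p, _, rfl⟩ := hx
    exact hcomm i a p

/-- Let `(W,S)` be a folding of a Coxeter system `(W',S')` via a diagram
automorphism `φ` (induced by a permutation `σ` of the index set) whose orbits on `S'`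
consist of pairwise commuting elements.  Then every reflection of `W` (a conjugate, by an
element of the fixed subgroup `W`, of one of the generators of `S`, i.e. of a product of a
`σ`-orbit of simple reflections) is the product of a `φ`-orbit of reflections of `W'`. -/
theorem folded_reflection_is_orbit_product
    {B' W' : Type*} [Group W'] [Fintype B'] [DecidableEq B']
    {M' : CoxeterMatrix B'} (cs' : CoxeterSystem M' W') (σ : Equiv.Perm B')
    (hσM : ∀ i j : B', M' (σ i) (σ j) = M' i j)
    (φ : W' ≃* W') (hφs : ∀ i : B', φ (cs'.simple i) = cs'.simple (σ i))
    (hcomm : ∀ (i : B') (k k' : ℕ),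
      Commute (cs'.simple ((σ ^ k) i)) (cs'.simple ((σ ^ k') i)))
    (hcox : ∃ (B : Type) (M : CoxeterMatrix B)
        (cs : CoxeterSystem M ↥(fixedSubgroup φ)),
      Set.range (fun i => ((cs.simple i : ↥(fixedSubgroup φ)) : W'))
        = Set.range (orbProd cs' σ hcomm)) :
    ∀ t : W',
      (∃ w ∈ fixedSubgroup φ, ∃ i : B', t = w * orbProd cs' σ hcomm i * w⁻¹) →
      ∃ (r : ℕ) (t₀ : W'), 0 < r ∧ cs'.IsReflection t₀ ∧ (⇑φ)^[r] t₀ = t₀ ∧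
        (∀ p q : ℕ, p < q → q < r → (⇑φ)^[p] t₀ ≠ (⇑φ)^[q] t₀) ∧
        t = ((List.range r).map fun p => (⇑φ)^[p] t₀).prod := by
  obtain ⟨B, M, cs, hrange⟩ := hcox
  rintro t ⟨w, hw, i, rfl⟩
  have hw' : φ w = w := hw
  set t₀ : W' := w * cs'.simple i * w⁻¹ with ht₀
  have hiter : ∀ n : ℕ, (⇑φ)^[n] t₀ = w * cs'.simple ((σ ^ n) i) * w⁻¹ := by
    intro n
    induction n with
    | zero => simp [ht₀]
    | succ n ih =>
      rw [Function.iterate_succ_apply', ih]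
      rw [map_mul, map_mul, map_inv, hw', hφs]
      rw [← Equiv.Perm.mul_apply, ← pow_succ']
  set ρ : ℕ := Function.minimalPeriod (⇑σ) i with hρ
  have hρpos : 0 < ρ := by
    apply Function.IsPeriodicPt.minimalPeriod_pos (orderOf_pos σ)
    show (⇑σ)^[orderOf σ] i = i
    rw [Equiv.Perm.iterate_eq_pow, pow_orderOf_eq_one]
    rfl
  have hσρ : (σ ^ ρ) i = i := by
    rw [← Equiv.Perm.iterate_eq_pow]
    exact Function.iterate_minimalPeriod
  have hperiodic : Function.IsPeriodicPt (⇑φ) ρ t₀ := by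
    show (⇑φ)^[ρ] t₀ = t₀
    rw [hiter, hσρ]
  set r : ℕ := Function.minimalPeriod (⇑φ) t₀ with hr
  have hrpos : 0 < r := hperiodic.minimalPeriod_pos hρpos
  obtain ⟨c, hc⟩ : r ∣ ρ := hperiodic.minimalPeriod_dvd
  have hφr : (⇑φ)^[r] t₀ = t₀ := Function.iterate_minimalPeriod
  have hsr : ∀ p : ℕ, cs'.simple ((σ ^ (p + r)) i) = cs'.simple ((σ ^ p) i) := by
    intro p
    have h1 : (⇑φ)^[p + r] t₀ = (⇑φ)^[p] t₀ := by
      rw [Function.iterate_add_apply, hφr]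
    rw [hiter, hiter] at h1
    exact mul_left_cancel (mul_right_cancel h1)
  have hsrk : ∀ k p : ℕ, cs'.simple ((σ ^ (p + r * k)) i) = cs'.simple ((σ ^ p) i) := by
    intro k
    induction k with
    | zero => simp
    | succ k ih =>
      intro p
      have : p + r * (k + 1) = (p + r) + r * k := by ring
      rw [this, ih (p + r), hsr p]
  -- the index list enumerating the orbit of i
  set Lidx : List B' := (List.range ρ).map (fun p => (σ ^ p) i) with hLidx
  have hnodup : Lidx.Nodup := by
    refine List.Nodup.map_on ?_ (List.nodup_range : (List.range ρ).Nodup)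
    intro p hp q hq hpq
    rw [List.mem_range] at hp hq
    have := Function.iterate_injOn_Iio_minimalPeriod (f := ⇑σ) (x := i)
    refine this (Set.mem_Iio.mpr hp) (Set.mem_Iio.mpr hq) ?_
    simpa only [Equiv.Perm.iterate_eq_pow] using hpq
  have hmem : ∀ j : B', (∃ k : ℕ, (σ ^ k) i = j) ↔ j ∈ Lidx := by
    intro j
    constructor
    · rintro ⟨k, rfl⟩
      rw [hLidx, List.mem_map]
      refine ⟨k % ρ, List.mem_range.mpr (Nat.mod_lt _ hρpos), ?_⟩
      rw [← Equiv.Perm.iterate_eq_pow, ← Equiv.Perm.iterate_eq_pow]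
      exact Function.iterate_mod_minimalPeriod_eq
    · intro hj
      rw [hLidx, List.mem_map] at hj
      obtain ⟨p, _, rfl⟩ := hj
      exact ⟨p, rfl⟩
  have hfilter : ∀ (inst : DecidablePred fun j : B' => ∃ k : ℕ, (σ ^ k) i = j),
      (@Finset.filter _ _ inst Finset.univ) = Lidx.toFinset := by
    intro inst
    ext j
    rw [Finset.mem_filter, List.mem_toFinset, ← hmem j]
    simp
  have horb : orbProd cs' σ hcomm i = (Lidx.map cs'.simple).prod := by
    unfold orbProd
    refine Eq.trans (Finset.noncommProd_congr (hfilter _) (fun x _ => rfl) _) ?_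
    exact Finset.noncommProd_toFinset _ _ _ hnodup
  set b : W' := ((List.range r).map (fun p => cs'.simple ((σ ^ p) i))).prod with hb
  have hblock : ∀ k : ℕ,
      ((List.range (r * k)).map (fun p => cs'.simple ((σ ^ p) i))).prod = b ^ k := by
    intro k
    induction k with
    | zero => simp
    | succ k ih =>
      have h1 : r * (k + 1) = r * k + r := by ring
      rw [h1, List.range_add, List.map_append, List.prod_append, ih, List.map_map]
      have h2 : ((List.range r).map ((fun p => cs'.simple ((σ ^ p) i)) ∘ (r * k + ·))).prod
          = b := by
        rw [hb]
        congr 1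
        apply List.map_congr_left
        intro p _
        show cs'.simple ((σ ^ (r * k + p)) i) = cs'.simple ((σ ^ p) i)
        rw [Nat.add_comm (r * k) p]
        exact hsrk k p
      rw [h2, pow_succ]
  have hprodc : (Lidx.map cs'.simple).prod = b ^ c := by
    rw [hLidx, List.map_map]
    have := hblock c
    rw [← hc] at this
    exact this
  have hbpair : ((List.range r).map (fun p => cs'.simple ((σ ^ p) i))).Pairwise Commute :=
    list_pairwise_commute_simple cs' σ i hcomm _
  have hb2 : b * b = 1 := by
    have hinv : b⁻¹ = b := by
      rw [hb, List.prod_inv_reverse]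
      have h3 : (((List.range r).map (fun p => cs'.simple ((σ ^ p) i))).map fun x => x⁻¹)
          = (List.range r).map (fun p => cs'.simple ((σ ^ p) i)) := by
        rw [List.map_map]
        apply List.map_congr_left
        intro p _
        exact cs'.inv_simple _
      rw [h3]
      exact ((List.range r).map (fun p => cs'.simple ((σ ^ p) i))).reverse_perm.prod_eq'
        (List.pairwise_reverse.mpr (hbpair.imp fun h => h.symm))
    calc b * b = b * b⁻¹ := by rw [hinv]
    _ = 1 := mul_inv_cancel b
  rcases Nat.even_or_odd c with ⟨k, hk⟩ | ⟨k, hk⟩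
  · -- even case: orbProd i = 1, contradicting hcox
    exfalso
    have h1 : orbProd cs' σ hcomm i = 1 := by
      rw [horb, hprodc, hk, ← two_mul, pow_mul, pow_two, hb2, one_pow]
    have h2 : (1 : W') ∈ Set.range (orbProd cs' σ hcomm) := ⟨i, h1⟩
    rw [← hrange] at h2
    obtain ⟨z, hz⟩ := h2
    have hz1 : cs.simple z = 1 := Subtype.coe_injective hz
    have := cs.length_simple z
    rw [hz1, cs.length_one] at this
    exact one_ne_zero this.symm
  · -- odd case
    refine ⟨r, t₀, hrpos, ⟨w, i, rfl⟩, hφr, ?_, ?_⟩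
    · intro p q hpq hq hne
      have := Function.iterate_injOn_Iio_minimalPeriod (f := ⇑φ) (x := t₀)
        (Set.mem_Iio.mpr (hpq.trans hq)) (Set.mem_Iio.mpr hq) hne
      exact absurd this (Nat.ne_of_lt hpq)
    · have hbc : b ^ c = b := by
        rw [hk, pow_add, pow_mul, pow_two, hb2, one_pow, one_mul, pow_one]
      rw [horb, hprodc, hbc]
      have h4 : ((List.range r).map fun p => (⇑φ)^[p] t₀)
          = ((List.range r).map (fun p => cs'.simple ((σ ^ p) i))).map
            (fun x => (MulAut.conj w) x) := by
        rw [List.map_map]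
        apply List.map_congr_left
        intro p _
        rw [hiter p]
        simp [MulAut.conj_apply]
      rw [h4, ← map_list_prod (MulAut.conj w : W' ≃* W'), ← hb]
      simp [MulAut.conj_apply]
end

section
/- In the affine symmetric group, let c be the Coxeter element determined by a partition of {1,...,n} into a nonempty set of outer points a₁ < a₂ < ... < a_k and a nonempty set of inner points b₁ > b₂ > ... > b_{n-k}. Then c, as a periodic permutation of ℤ, has exactly two infinite cycles: the increasing cycle (⋯ a₁ a₂ ⋯ a_k a₁+n ⋯) and the decreasing cycle (⋯ b₁ b₂ ⋯ b_{n-k} b₁−n ⋯). That is, c(a_i) = a_{i+1} for i < k, c(a_k) = a₁+n, c(b_i) = b_{i+1} for i < n−k, c(b_{n-k}) = b₁−n, extended by c(j+n) = c(j)+n. -/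
lemma reflN_invol (n i j : ℤ) (h : ¬ i % n = j % n) :
    Function.Involutive (fun x : ℤ =>
      x + (if x % n = i % n then j - i else if x % n = j % n then i - j else 0)) := by
  intro x
  by_cases h1 : x % n = i % n
  · simp only [if_pos h1]
    have e1 : (x + (j - i)) % n = j % n := by
      rw [Int.add_emod, h1, ← Int.add_emod, show i + (j - i) = j by ring]
    have e2 : ¬ (x + (j - i)) % n = i % n := by rw [e1]; exact fun hc => h hc.symm
    simp only [if_neg e2, if_pos e1]; ring
  · by_cases h2 : x % n = j % n
    · simp only [if_neg h1, if_pos h2]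
      have e1 : (x + (i - j)) % n = i % n := by
        rw [Int.add_emod, h2, ← Int.add_emod, show j + (i - j) = i by ring]
      simp only [if_pos e1]; ring
    · simp only [if_neg h1, if_neg h2, add_zero, if_neg h1, if_neg h2]

/-- The reflection `(i j)_n`: the periodic permutation swapping `i + kn` and `j + kn` for
all `k ∈ ℤ` and fixing all other integers (the identity if `i ≡ j (mod n)`). -/
noncomputable def reflN (n i j : ℤ) : Equiv.Perm ℤ :=
  if h : i % n = j % n then 1 else (reflN_invol n i j h).toPerm

private def Gfun (n i x : ℤ) : ℤ :=
  x + (if x % n = i % n then 1 else if x % n = (i + 1) % n then -1 else 0)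

private lemma mod_ne_succ {n : ℤ} (hn : 2 ≤ n) (i : ℤ) : ¬ i % n = (i + 1) % n := by
  intro h
  have h2 : n ∣ (i + 1) - i := Int.ModEq.dvd h
  have h3 : n ∣ 1 := by simpa using h2
  have := Int.le_of_dvd one_pos h3
  omega

private lemma mod_sub_n (n w : ℤ) : (w - n) % n = w % n := by
  conv_rhs => rw [show w = w - n + n * 1 by ring]
  rw [Int.add_mul_emod_self_left]

private lemma mod_add_n (n w : ℤ) : (w + n) % n = w % n := by
  conv_lhs => rw [show w + n = w + n * 1 by ring]
  rw [Int.add_mul_emod_self_left]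

private lemma reflN_apply {n : ℤ} (hn : 2 ≤ n) (i x : ℤ) :
    reflN n i (i + 1) x = Gfun n i x := by
  unfold reflN
  rw [dif_neg (mod_ne_succ hn i)]
  rw [show ((reflN_invol n i (i+1) (mod_ne_succ hn i)).toPerm) x
      = x + (if x % n = i % n then (i+1) - i else if x % n = (i+1) % n then i - (i+1) else 0)
      from rfl]
  unfold Gfun
  split_ifs <;> ring

private lemma prod_eq_foldr {n : ℤ} (hn : 2 ≤ n) (l : List ℤ) (x : ℤ) :
    ((l.map fun i => reflN n i (i + 1)).prod) x = l.foldr (Gfun n) x := by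
  induction l generalizing x with
  | nil => simp
  | cons a l ih =>
    simp only [List.map_cons, List.prod_cons, Equiv.Perm.mul_apply, List.foldr_cons]
    rw [ih, reflN_apply hn]

private lemma foldr_notouch {n : ℤ} (L : List ℤ) (v : ℤ)
    (h : ∀ e ∈ L, ¬ v % n = e % n ∧ ¬ v % n = (e + 1) % n) :
    L.foldr (Gfun n) v = v := by
  induction L with
  | nil => rfl
  | cons a L ih =>
    have ha := h a (List.mem_cons_self)
    rw [List.foldr_cons, ih (fun e he => h e (List.mem_cons_of_mem a he))]
    unfold Gfun
    rw [if_neg ha.1, if_neg ha.2]; ring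

private lemma foldr_shift {n : ℤ} (L : List ℤ) (x : ℤ) :
    L.foldr (Gfun n) (x + n) = L.foldr (Gfun n) x + n := by
  induction L with
  | nil => rfl
  | cons a L ih =>
    rw [List.foldr_cons, List.foldr_cons, ih]
    unfold Gfun
    rw [mod_add_n]
    split_ifs <;> ring

private lemma icc_mod_inj {n : ℤ} (a b : ℤ) (ha1 : 1 ≤ a) (ha2 : a ≤ n)
    (hb1 : 1 ≤ b) (hb2 : b ≤ n) (h : a % n = b % n) : a = b := by
  have hd : n ∣ b - a := Int.ModEq.dvd h
  obtain ⟨k, hk⟩ := hd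
  rcases lt_trichotomy k 0 with hk0 | hk0 | hk0
  · have h2 : n * k ≤ n * (-1) := mul_le_mul_of_nonneg_left (by omega) (by omega)
    have h3 : n * (-1) = -n := by ring
    linarith
  · subst hk0; simp at hk; omega
  · have h2 : n * 1 ≤ n * k := mul_le_mul_of_nonneg_left (by omega) (by omega)
    have h3 : n * 1 = n := by ring
    linarith

private lemma foldr_up {n : ℤ} (hn : 2 ≤ n) :
    ∀ (m : ℕ) (L : List ℤ) (v : ℤ) (t : ℕ → ℤ),
      L.Nodup →
      (∀ a ∈ L, ∀ b ∈ L, a % n = b % n → a = b) →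
      (∀ j, j < m → t j ∈ L ∧ (t j) % n = (v + j) % n) →
      (∀ j, j + 1 < m → L.idxOf (t (j + 1)) < L.idxOf (t j)) →
      (∀ x ∈ L, x % n = (v + m) % n → 1 ≤ m ∧ L.idxOf (t (m - 1)) < L.idxOf x) →
      (∀ x ∈ L, (x + 1) % n = v % n → 1 ≤ m ∧ L.idxOf x < L.idxOf (t 0)) →
      L.foldr (Gfun n) v = v + m := by
  intro m
  induction m with
  | zero =>
    intro L v t hnd hres ht hchain hleft hright
    simp only [Nat.cast_zero, add_zero]
    apply foldr_notouch
    intro e he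
    constructor
    · intro hcon
      have := (hleft e he (by simpa using hcon.symm)).1; omega
    · intro hcon
      have := (hright e he hcon.symm).1; omega
  | succ M ih =>
    intro L v t hnd hres ht hchain hleft hright
    obtain ⟨ht0L, ht0r⟩ := ht 0 (by omega)
    have ht0r' : t 0 % n = v % n := by simpa using ht0r
    set p := L.idxOf (t 0) with hp
    have hplt : p < L.length := List.idxOf_lt_length_iff.mpr ht0L
    have hLp : L[p] = t 0 := List.getElem_idxOf hplt
    have hsplit : L = L.take p ++ t 0 :: L.drop (p + 1) := by
      conv_lhs => rw [← List.take_append_drop p L]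
      rw [List.drop_eq_getElem_cons hplt, hLp]
    have hnd2 : (L.take p ++ t 0 :: L.drop (p + 1)).Nodup := by rw [← hsplit]; exact hnd
    obtain ⟨hndA, hndB, hdAB⟩ := List.nodup_append'.mp hnd2
    have ht0A : t 0 ∉ L.take p := fun hmem => hdAB hmem (List.mem_cons_self)
    have ht0B : t 0 ∉ L.drop (p + 1) := (List.nodup_cons.mp hndB).1
    have hsubA : ∀ x ∈ L.take p, x ∈ L := fun x hx => List.mem_of_mem_take hx
    have hsubB : ∀ x ∈ L.drop (p + 1), x ∈ L := fun x hx => List.mem_of_mem_drop hx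
    have hidxA : ∀ x ∈ L.take p, L.idxOf x = (L.take p).idxOf x := by
      intro x hx
      conv_lhs => rw [hsplit]
      exact List.idxOf_append_of_mem hx
    have hidx_lt : ∀ x ∈ L.take p, L.idxOf x < p := by
      intro x hx
      have h2 : (L.take p).idxOf x < (L.take p).length := List.idxOf_lt_length_iff.mpr hx
      have h3 : (L.take p).length ≤ p := by simp [List.length_take]
      have h4 := hidxA x hx
      omega
    have hmemA : ∀ x, x ∈ L → L.idxOf x < p → x ∈ L.take p := by
      intro x hx hlt
      have hxl : L.idxOf x < L.length := List.idxOf_lt_length_iff.mpr hx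
      have hlt2 : L.idxOf x < (L.take p).length := by
        simp only [List.length_take]; omega
      have he : (L.take p)[L.idxOf x]'hlt2 = x := by
        rw [List.getElem_take]
        exact List.getElem_idxOf hxl
      rw [← he]
      exact List.getElem_mem _
    have key : ∀ j, j < M + 1 → L.idxOf (t j) ≤ p := by
      intro j
      induction j with
      | zero => intro _; omega
      | succ i ihi =>
        intro hj
        have h1 := hchain i (by omega)
        have h2 := ihi (by omega)
        omega
    have key2 : ∀ j, 1 ≤ j → j < M + 1 → L.idxOf (t j) < p := by
      intro j h1 h2
      match j, h1 with
      | (i + 1), _ =>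
        have h3 := hchain i (by omega)
        have h4 := key i (by omega)
        omega
    have hB : (L.drop (p + 1)).foldr (Gfun n) v = v := by
      apply foldr_notouch
      intro e he
      constructor
      · intro hcon
        have he' : e = t 0 := hres e (hsubB e he) (t 0) ht0L (by rw [ht0r', ← hcon])
        exact ht0B (he' ▸ he)
      · intro hcon
        have h2 := (hright e (hsubB e he) hcon.symm).2
        exact hdAB (hmemA e (hsubB e he) h2) (List.mem_cons_of_mem _ he)
    have hstep : Gfun n (t 0) v = v + 1 := by
      unfold Gfun
      rw [if_pos ht0r'.symm]
    have hA : (L.take p).foldr (Gfun n) (v + 1) = v + 1 + M := by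
      refine ih (L.take p) (v + 1) (fun j => t (j + 1)) hndA
        (fun a ha b hb => hres a (hsubA a ha) b (hsubA b hb)) ?_ ?_ ?_ ?_
      · intro j hj
        obtain ⟨hmem, hr⟩ := ht (j + 1) (by omega)
        refine ⟨hmemA _ hmem (key2 (j + 1) (by omega) (by omega)), ?_⟩
        rw [hr]; congr 1; push_cast; ring
      · intro j hj
        have h1 := hchain (j + 1) (by omega)
        have m2 : t (j + 1) ∈ L.take p :=
          hmemA _ (ht (j + 1) (by omega)).1 (key2 (j + 1) (by omega) (by omega))
        have m1 : t (j + 1 + 1) ∈ L.take p :=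
          hmemA _ (ht (j + 1 + 1) (by omega)).1 (key2 (j + 1 + 1) (by omega) (by omega))
        show (L.take p).idxOf (t (j + 1 + 1)) < (L.take p).idxOf (t (j + 1))
        rw [← hidxA _ m1, ← hidxA _ m2]
        exact h1
      · intro x hxA hxr
        have hxL := hsubA x hxA
        have hxr' : x % n = (v + ((M + 1 : ℕ) : ℤ)) % n := by
          rw [hxr]; congr 1; push_cast; ring
        obtain ⟨-, hlt⟩ := hleft x hxL hxr'
        have hlt' : L.idxOf (t M) < L.idxOf x := by simpa using hlt
        have hxlt := hidx_lt x hxA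
        have hM : 1 ≤ M := by
          by_contra hcon
          have hM0 : M = 0 := by omega
          subst hM0
          omega
        refine ⟨hM, ?_⟩
        show (L.take p).idxOf (t ((M - 1) + 1)) < (L.take p).idxOf x
        rw [show (M - 1) + 1 = M from by omega]
        have mM : t M ∈ L.take p :=
          hmemA _ (ht M (by omega)).1 (key2 M (by omega) (by omega))
        rw [← hidxA _ mM, ← hidxA _ hxA]
        exact hlt'
      · intro x hxA hxr
        exfalso
        have hxv : x % n = v % n := by
          have h1 : Int.ModEq n (x + 1) (v + 1) := hxr
          have h2 := Int.ModEq.sub h1 (Int.ModEq.refl 1)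
          simpa [Int.ModEq] using h2
        have he' : x = t 0 := hres x (hsubA x hxA) (t 0) ht0L (by rw [hxv, ht0r'])
        exact ht0A (he' ▸ hxA)
    calc L.foldr (Gfun n) v
        = (L.take p ++ t 0 :: L.drop (p + 1)).foldr (Gfun n) v := by rw [← hsplit]
      _ = (L.take p).foldr (Gfun n) (Gfun n (t 0) ((L.drop (p + 1)).foldr (Gfun n) v)) := by
          rw [List.foldr_append, List.foldr_cons]
      _ = v + 1 + M := by rw [hB, hstep]; exact hA
      _ = v + ((M + 1 : ℕ) : ℤ) := by push_cast; ring

private lemma foldr_down {n : ℤ} (hn : 2 ≤ n) :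
    ∀ (m : ℕ) (L : List ℤ) (v : ℤ) (t : ℕ → ℤ),
      L.Nodup →
      (∀ a ∈ L, ∀ b ∈ L, a % n = b % n → a = b) →
      (∀ j, j < m → t j ∈ L ∧ (t j) % n = (v - 1 - j) % n) →
      (∀ j, j + 1 < m → L.idxOf (t (j + 1)) < L.idxOf (t j)) →
      (∀ x ∈ L, (x + 1) % n = (v - m) % n → 1 ≤ m ∧ L.idxOf (t (m - 1)) < L.idxOf x) →
      (∀ x ∈ L, x % n = v % n → 1 ≤ m ∧ L.idxOf x < L.idxOf (t 0)) →
      L.foldr (Gfun n) v = v - m := by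
  intro m
  induction m with
  | zero =>
    intro L v t hnd hres ht hchain hend hstart
    simp only [Nat.cast_zero, sub_zero]
    apply foldr_notouch
    intro e he
    constructor
    · intro hcon
      have := (hstart e he hcon.symm).1; omega
    · intro hcon
      have := (hend e he (by simpa using hcon.symm)).1; omega
  | succ M ih =>
    intro L v t hnd hres ht hchain hend hstart
    obtain ⟨ht0L, ht0r⟩ := ht 0 (by omega)
    have ht0r' : t 0 % n = (v - 1) % n := by simpa using ht0r
    set p := L.idxOf (t 0) with hp
    have hplt : p < L.length := List.idxOf_lt_length_iff.mpr ht0L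
    have hLp : L[p] = t 0 := List.getElem_idxOf hplt
    have hsplit : L = L.take p ++ t 0 :: L.drop (p + 1) := by
      conv_lhs => rw [← List.take_append_drop p L]
      rw [List.drop_eq_getElem_cons hplt, hLp]
    have hnd2 : (L.take p ++ t 0 :: L.drop (p + 1)).Nodup := by rw [← hsplit]; exact hnd
    obtain ⟨hndA, hndB, hdAB⟩ := List.nodup_append'.mp hnd2
    have ht0A : t 0 ∉ L.take p := fun hmem => hdAB hmem (List.mem_cons_self)
    have ht0B : t 0 ∉ L.drop (p + 1) := (List.nodup_cons.mp hndB).1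
    have hsubA : ∀ x ∈ L.take p, x ∈ L := fun x hx => List.mem_of_mem_take hx
    have hsubB : ∀ x ∈ L.drop (p + 1), x ∈ L := fun x hx => List.mem_of_mem_drop hx
    have hidxA : ∀ x ∈ L.take p, L.idxOf x = (L.take p).idxOf x := by
      intro x hx
      conv_lhs => rw [hsplit]
      exact List.idxOf_append_of_mem hx
    have hidx_lt : ∀ x ∈ L.take p, L.idxOf x < p := by
      intro x hx
      have h2 : (L.take p).idxOf x < (L.take p).length := List.idxOf_lt_length_iff.mpr hx
      have h3 : (L.take p).length ≤ p := by simp [List.length_take]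
      have h4 := hidxA x hx
      omega
    have hmemA : ∀ x, x ∈ L → L.idxOf x < p → x ∈ L.take p := by
      intro x hx hlt
      have hxl : L.idxOf x < L.length := List.idxOf_lt_length_iff.mpr hx
      have hlt2 : L.idxOf x < (L.take p).length := by
        simp only [List.length_take]; omega
      have he : (L.take p)[L.idxOf x]'hlt2 = x := by
        rw [List.getElem_take]
        exact List.getElem_idxOf hxl
      rw [← he]
      exact List.getElem_mem _
    have key : ∀ j, j < M + 1 → L.idxOf (t j) ≤ p := by
      intro j
      induction j with
      | zero => intro _; omega
      | succ i ihi =>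
        intro hj
        have h1 := hchain i (by omega)
        have h2 := ihi (by omega)
        omega
    have key2 : ∀ j, 1 ≤ j → j < M + 1 → L.idxOf (t j) < p := by
      intro j h1 h2
      match j, h1 with
      | (i + 1), _ =>
        have h3 := hchain i (by omega)
        have h4 := key i (by omega)
        omega
    have hB : (L.drop (p + 1)).foldr (Gfun n) v = v := by
      apply foldr_notouch
      intro e he
      constructor
      · intro hcon
        have h2 := (hstart e (hsubB e he) hcon.symm).2
        exact hdAB (hmemA e (hsubB e he) h2) (List.mem_cons_of_mem _ he)
      · intro hcon
        have her : e % n = t 0 % n := by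
          have h1 : Int.ModEq n (e + 1) v := hcon.symm
          have h2 := Int.ModEq.sub_right 1 h1
          rw [show e + 1 - 1 = e from by ring] at h2
          rw [h2, ht0r']
        have he' : e = t 0 := hres e (hsubB e he) (t 0) ht0L her
        exact ht0B (he' ▸ he)
    have hvne : ¬ v % n = t 0 % n := by
      intro h
      have h2 := mod_ne_succ hn (v - 1)
      rw [show v - 1 + 1 = v from by ring] at h2
      exact h2 (ht0r'.symm.trans h.symm)
    have hvp : v % n = (t 0 + 1) % n := by
      have h3 : Int.ModEq n (t 0) (v - 1) := ht0r'
      have h4 := Int.ModEq.add_right 1 h3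
      rw [show v - 1 + 1 = v from by ring] at h4
      exact h4.symm
    have hstep : Gfun n (t 0) v = v - 1 := by
      unfold Gfun
      rw [if_neg hvne, if_pos hvp]
      ring
    have hA : (L.take p).foldr (Gfun n) (v - 1) = v - 1 - M := by
      refine ih (L.take p) (v - 1) (fun j => t (j + 1)) hndA
        (fun a ha b hb => hres a (hsubA a ha) b (hsubA b hb)) ?_ ?_ ?_ ?_
      · intro j hj
        obtain ⟨hmem, hr⟩ := ht (j + 1) (by omega)
        refine ⟨hmemA _ hmem (key2 (j + 1) (by omega) (by omega)), ?_⟩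
        rw [hr]; congr 1; push_cast; ring
      · intro j hj
        have h1 := hchain (j + 1) (by omega)
        have m2 : t (j + 1) ∈ L.take p :=
          hmemA _ (ht (j + 1) (by omega)).1 (key2 (j + 1) (by omega) (by omega))
        have m1 : t (j + 1 + 1) ∈ L.take p :=
          hmemA _ (ht (j + 1 + 1) (by omega)).1 (key2 (j + 1 + 1) (by omega) (by omega))
        show (L.take p).idxOf (t (j + 1 + 1)) < (L.take p).idxOf (t (j + 1))
        rw [← hidxA _ m1, ← hidxA _ m2]
        exact h1
      · intro x hxA hxr
        have hxL := hsubA x hxA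
        have hxr' : (x + 1) % n = (v - ((M + 1 : ℕ) : ℤ)) % n := by
          rw [hxr]; congr 1; push_cast; ring
        obtain ⟨-, hlt⟩ := hend x hxL hxr'
        have hlt' : L.idxOf (t M) < L.idxOf x := by simpa using hlt
        have hxlt := hidx_lt x hxA
        have hM : 1 ≤ M := by
          by_contra hcon
          have hM0 : M = 0 := by omega
          subst hM0
          omega
        refine ⟨hM, ?_⟩
        show (L.take p).idxOf (t ((M - 1) + 1)) < (L.take p).idxOf x
        rw [show (M - 1) + 1 = M from by omega]
        have mM : t M ∈ L.take p :=
          hmemA _ (ht M (by omega)).1 (key2 M (by omega) (by omega))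
        rw [← hidxA _ mM, ← hidxA _ hxA]
        exact hlt'
      · intro x hxA hxr
        exfalso
        have hxv : x % n = t 0 % n := by
          have h1 : Int.ModEq n x (v - 1) := hxr
          rw [h1, ht0r']
        have he' : x = t 0 := hres x (hsubA x hxA) (t 0) ht0L hxv
        exact ht0A (he' ▸ hxA)
    calc L.foldr (Gfun n) v
        = (L.take p ++ t 0 :: L.drop (p + 1)).foldr (Gfun n) v := by rw [← hsplit]
      _ = (L.take p).foldr (Gfun n) (Gfun n (t 0) ((L.drop (p + 1)).foldr (Gfun n) v)) := by
          rw [List.foldr_append, List.foldr_cons]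
      _ = v - 1 - M := by rw [hB, hstep]; exact hA
      _ = v - ((M + 1 : ℕ) : ℤ) := by push_cast; ring

private lemma cox_step_up
    (n : ℤ) (hn : 2 ≤ n) (Out Inn : Finset ℤ)
    (hunion : Out ∪ Inn = Finset.Icc (1 : ℤ) n)
    (l : List ℤ) (hlnd : l.Nodup)
    (hlmem : ∀ x : ℤ, x ∈ l ↔ x ∈ Finset.Icc (1 : ℤ) n)
    (horient : ∀ i ∈ Finset.Icc (1 : ℤ) n,
      i ∈ Out ↔ l.idxOf (if i = 1 then n else i - 1) < l.idxOf i)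
    (a b : ℤ) (ha : a ∈ Out) (hb : (if b ≤ n then b else b - n) ∈ Out)
    (hab : a < b) (hbn : b ≤ a + n)
    (hbetween : ∀ w, a < w → w < b → (if w ≤ n then w else w - n) ∉ Out) :
    l.foldr (Gfun n) a = b := by
  have hsubO : ∀ x ∈ Out, 1 ≤ x ∧ x ≤ n := by
    intro x hx
    have hx2 : x ∈ Out ∪ Inn := Finset.mem_union_left _ hx
    rw [hunion, Finset.mem_Icc] at hx2
    exact hx2
  obtain ⟨ha1, ha2⟩ := hsubO a ha
  have hbI := hsubO _ hb
  have hb2n : 1 ≤ b ∧ b ≤ 2 * n := by split_ifs at hbI <;> omega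
  have hmem : ∀ x : ℤ, 1 ≤ x → x ≤ n → x ∈ l := fun x h1 h2 =>
    (hlmem x).mpr (Finset.mem_Icc.mpr ⟨h1, h2⟩)
  have hIcc : ∀ x ∈ l, 1 ≤ x ∧ x ≤ n := fun x hx => Finset.mem_Icc.mp ((hlmem x).mp hx)
  have hres : ∀ x ∈ l, ∀ y ∈ l, x % n = y % n → x = y := by
    intro x hx y hy h
    obtain ⟨h1, h2⟩ := hIcc x hx
    obtain ⟨h3, h4⟩ := hIcc y hy
    exact icc_mod_inj x y h1 h2 h3 h4 h
  have horient' : ∀ i : ℤ, 1 ≤ i → i ≤ n →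
      (i ∈ Out ↔ l.idxOf (if i = 1 then n else i - 1) < l.idxOf i) :=
    fun i h1 h2 => horient i (Finset.mem_Icc.mpr ⟨h1, h2⟩)
  have hres_t : ∀ w : ℤ, (if w ≤ n then w else w - n) % n = w % n := by
    intro w
    split_ifs with h
    · rfl
    · exact mod_sub_n n w
  have hmodne : ∀ u w : ℤ, u + 1 = w → ¬ u % n = w % n := by
    intro u w he h
    exact mod_ne_succ hn u (by rw [he]; exact h)
  have hkey : l.foldr (Gfun n) a = a + (((b - a).toNat : ℕ) : ℤ) := by
    refine foldr_up hn (b - a).toNat l a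
      (fun j => if a + (j : ℤ) ≤ n then a + (j : ℤ) else a + (j : ℤ) - n) hlnd hres ?_ ?_ ?_ ?_
    · intro j hj
      constructor
      · split_ifs with h
        · exact hmem _ (by omega) h
        · exact hmem _ (by omega) (by omega)
      · exact hres_t (a + (j : ℤ))
    · intro j hj
      have hj' : (j : ℤ) + 1 < b - a := by omega
      have hc1 : ((j + 1 : ℕ) : ℤ) = (j : ℤ) + 1 := by push_cast; ring
      rw [hc1]
      have hiO : (if a + ((j : ℤ) + 1) ≤ n then a + ((j : ℤ) + 1) else a + ((j : ℤ) + 1) - n) ∉ Out :=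
        hbetween (a + ((j : ℤ) + 1)) (by omega) (by omega)
      have hjnn : (0 : ℤ) ≤ (j : ℤ) := by positivity
      have hi1 : 1 ≤ (if a + ((j : ℤ) + 1) ≤ n then a + ((j : ℤ) + 1) else a + ((j : ℤ) + 1) - n) ∧
          (if a + ((j : ℤ) + 1) ≤ n then a + ((j : ℤ) + 1) else a + ((j : ℤ) + 1) - n) ≤ n := by
        split_ifs <;> omega
      have hpv1 : 1 ≤ (if a + (j : ℤ) ≤ n then a + (j : ℤ) else a + (j : ℤ) - n) ∧
          (if a + (j : ℤ) ≤ n then a + (j : ℤ) else a + (j : ℤ) - n) ≤ n := by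
        split_ifs <;> omega
      have hor := horient' _ hi1.1 hi1.2
      have hprev : (if (if a + ((j : ℤ) + 1) ≤ n then a + ((j : ℤ) + 1) else a + ((j : ℤ) + 1) - n) = 1
            then n else (if a + ((j : ℤ) + 1) ≤ n then a + ((j : ℤ) + 1) else a + ((j : ℤ) + 1) - n) - 1)
          = (if a + (j : ℤ) ≤ n then a + (j : ℤ) else a + (j : ℤ) - n) := by
        split_ifs <;> omega
      rw [hprev] at hor
      have hnotlt : ¬ (l.idxOf (if a + (j : ℤ) ≤ n then a + (j : ℤ) else a + (j : ℤ) - n)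
          < l.idxOf (if a + ((j : ℤ) + 1) ≤ n then a + ((j : ℤ) + 1) else a + ((j : ℤ) + 1) - n)) :=
        fun hlt => hiO (hor.mpr hlt)
      have himem : (if a + ((j : ℤ) + 1) ≤ n then a + ((j : ℤ) + 1) else a + ((j : ℤ) + 1) - n) ∈ l :=
        hmem _ hi1.1 hi1.2
      have hpvmem : (if a + (j : ℤ) ≤ n then a + (j : ℤ) else a + (j : ℤ) - n) ∈ l :=
        hmem _ hpv1.1 hpv1.2
      have hne : (if a + ((j : ℤ) + 1) ≤ n then a + ((j : ℤ) + 1) else a + ((j : ℤ) + 1) - n)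
          ≠ (if a + (j : ℤ) ≤ n then a + (j : ℤ) else a + (j : ℤ) - n) := by
        intro he
        have e1 := hres_t (a + (j : ℤ))
        have e2 := hres_t (a + ((j : ℤ) + 1))
        exact hmodne (a + (j : ℤ)) (a + ((j : ℤ) + 1)) (by ring) (by rw [← e1, ← e2, he])
      have hneidx : l.idxOf (if a + ((j : ℤ) + 1) ≤ n then a + ((j : ℤ) + 1) else a + ((j : ℤ) + 1) - n)
          ≠ l.idxOf (if a + (j : ℤ) ≤ n then a + (j : ℤ) else a + (j : ℤ) - n) :=
        fun he => hne ((List.idxOf_inj himem).mp he)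
      omega
    · intro x hx hxr
      have hxI := hIcc x hx
      have hab' : a + (((b - a).toNat : ℕ) : ℤ) = b := by omega
      rw [hab'] at hxr
      have hnmb : (if b ≤ n then b else b - n) ∈ l := hmem _ hbI.1 hbI.2
      have hxe : x = (if b ≤ n then b else b - n) :=
        hres x hx _ hnmb (by rw [hxr, ← hres_t b])
      refine ⟨by omega, ?_⟩
      have hc2 : a + (((b - a).toNat - 1 : ℕ) : ℤ) = b - 1 := by omega
      rw [hc2]
      have hor := (horient' _ hbI.1 hbI.2).mp hb
      have hprev : (if (if b ≤ n then b else b - n) = 1 then n else (if b ≤ n then b else b - n) - 1)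
          = (if b - 1 ≤ n then b - 1 else b - 1 - n) := by
        split_ifs <;> omega
      rw [hprev] at hor
      rw [hxe]
      exact hor
    · intro x hx hxr
      have hxI := hIcc x hx
      have hpA : (if a = 1 then n else a - 1) ∈ l :=
        hmem _ (by split_ifs <;> omega) (by split_ifs <;> omega)
      have hpAr : (if a = 1 then n else a - 1) % n = (a - 1) % n := by
        split_ifs with h
        · rw [h]; simp [Int.emod_self]
        · rfl
      have hxar : x % n = (a - 1) % n := by
        have h1 : Int.ModEq n (x + 1) a := hxr
        have h2 := Int.ModEq.sub_right 1 h1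
        rw [show x + 1 - 1 = x from by ring] at h2
        exact h2
      have hxe : x = (if a = 1 then n else a - 1) := hres x hx _ hpA (by rw [hxar, ← hpAr])
      refine ⟨by omega, ?_⟩
      rw [show a + ((0 : ℕ) : ℤ) = a from by push_cast; ring]
      rw [if_pos ha2, hxe]
      exact (horient' a ha1 ha2).mp ha
  rw [hkey]
  omega

private lemma cox_step_down
    (n : ℤ) (hn : 2 ≤ n) (Out Inn : Finset ℤ)
    (hunion : Out ∪ Inn = Finset.Icc (1 : ℤ) n) (hdisj : Disjoint Out Inn)
    (l : List ℤ) (hlnd : l.Nodup)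
    (hlmem : ∀ x : ℤ, x ∈ l ↔ x ∈ Finset.Icc (1 : ℤ) n)
    (horient : ∀ i ∈ Finset.Icc (1 : ℤ) n,
      i ∈ Out ↔ l.idxOf (if i = 1 then n else i - 1) < l.idxOf i)
    (a b : ℤ) (ha : a ∈ Inn) (hb : (if 1 ≤ b then b else b + n) ∈ Inn)
    (hab : b < a) (hbn : a - n ≤ b)
    (hbetween : ∀ w, b < w → w < a → (if 1 ≤ w then w else w + n) ∉ Inn) :
    l.foldr (Gfun n) a = b := by
  have hsubI : ∀ x ∈ Inn, 1 ≤ x ∧ x ≤ n := by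
    intro x hx
    have hx2 : x ∈ Out ∪ Inn := Finset.mem_union_right _ hx
    rw [hunion, Finset.mem_Icc] at hx2
    exact hx2
  obtain ⟨ha1, ha2⟩ := hsubI a ha
  have hbI := hsubI _ hb
  have hb2n : 1 - n ≤ b ∧ b ≤ n := by split_ifs at hbI <;> omega
  have hmem : ∀ x : ℤ, 1 ≤ x → x ≤ n → x ∈ l := fun x h1 h2 =>
    (hlmem x).mpr (Finset.mem_Icc.mpr ⟨h1, h2⟩)
  have hIcc : ∀ x ∈ l, 1 ≤ x ∧ x ≤ n := fun x hx => Finset.mem_Icc.mp ((hlmem x).mp hx)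
  have hres : ∀ x ∈ l, ∀ y ∈ l, x % n = y % n → x = y := by
    intro x hx y hy h
    obtain ⟨h1, h2⟩ := hIcc x hx
    obtain ⟨h3, h4⟩ := hIcc y hy
    exact icc_mod_inj x y h1 h2 h3 h4 h
  have hnotO : ∀ x ∈ Inn, x ∉ Out := fun x hx hxO =>
    absurd hx (Finset.disjoint_left.mp hdisj hxO)
  have hOut_of : ∀ w : ℤ, 1 ≤ w → w ≤ n → w ∉ Inn → w ∈ Out := by
    intro w h1 h2 h3
    have hw : w ∈ Out ∪ Inn := by rw [hunion]; exact Finset.mem_Icc.mpr ⟨h1, h2⟩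
    rcases Finset.mem_union.mp hw with h | h
    · exact h
    · exact absurd h h3
  have horient' : ∀ i : ℤ, 1 ≤ i → i ≤ n →
      (i ∈ Out ↔ l.idxOf (if i = 1 then n else i - 1) < l.idxOf i) :=
    fun i h1 h2 => horient i (Finset.mem_Icc.mpr ⟨h1, h2⟩)
  have hres_t : ∀ w : ℤ, (if 1 ≤ w then w else w + n) % n = w % n := by
    intro w
    split_ifs with h
    · rfl
    · exact mod_add_n n w
  have hmodne : ∀ u w : ℤ, u + 1 = w → ¬ u % n = w % n := by
    intro u w he h
    exact mod_ne_succ hn u (by rw [he]; exact h)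
  have hresprev : ∀ y : ℤ, 1 ≤ y → (if y = 1 then n else y - 1) % n = (y - 1) % n := by
    intro y hy
    split_ifs with h
    · rw [h]; simp [Int.emod_self]
    · rfl
  have hkey : l.foldr (Gfun n) a = a - (((a - b).toNat : ℕ) : ℤ) := by
    refine foldr_down hn (a - b).toNat l a
      (fun j => if 1 ≤ a - 1 - (j : ℤ) then a - 1 - (j : ℤ) else a - 1 - (j : ℤ) + n)
      hlnd hres ?_ ?_ ?_ ?_
    · intro j hj
      constructor
      · split_ifs with h
        · exact hmem _ h (by omega)
        · exact hmem _ (by omega) (by omega)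
      · exact hres_t (a - 1 - (j : ℤ))
    · intro j hj
      have hj' : (j : ℤ) + 1 < a - b := by omega
      have hc1 : ((j + 1 : ℕ) : ℤ) = (j : ℤ) + 1 := by push_cast; ring
      rw [hc1]
      -- the point passed over is t j, which is Out
      have hptI : (if 1 ≤ a - 1 - (j : ℤ) then a - 1 - (j : ℤ) else a - 1 - (j : ℤ) + n) ∉ Inn :=
        hbetween (a - 1 - (j : ℤ)) (by omega) (by omega)
      have hpt1 : 1 ≤ (if 1 ≤ a - 1 - (j : ℤ) then a - 1 - (j : ℤ) else a - 1 - (j : ℤ) + n) ∧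
          (if 1 ≤ a - 1 - (j : ℤ) then a - 1 - (j : ℤ) else a - 1 - (j : ℤ) + n) ≤ n := by
        split_ifs <;> omega
      have hptO : (if 1 ≤ a - 1 - (j : ℤ) then a - 1 - (j : ℤ) else a - 1 - (j : ℤ) + n) ∈ Out :=
        hOut_of _ hpt1.1 hpt1.2 hptI
      have hor := (horient' _ hpt1.1 hpt1.2).mp hptO
      have hprev : (if (if 1 ≤ a - 1 - (j : ℤ) then a - 1 - (j : ℤ) else a - 1 - (j : ℤ) + n) = 1
            then n else (if 1 ≤ a - 1 - (j : ℤ) then a - 1 - (j : ℤ) else a - 1 - (j : ℤ) + n) - 1)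
          = (if 1 ≤ a - 1 - ((j : ℤ) + 1) then a - 1 - ((j : ℤ) + 1) else a - 1 - ((j : ℤ) + 1) + n) := by
        split_ifs <;> omega
      rw [hprev] at hor
      exact hor
    · intro x hx hxr
      have hxI := hIcc x hx
      have hab' : a - (((a - b).toNat : ℕ) : ℤ) = b := by omega
      rw [hab'] at hxr
      -- x ≡ b - 1, and x = prev of (nm b)
      have hxbr : x % n = (b - 1) % n := by
        have h1 : Int.ModEq n (x + 1) b := hxr
        have h2 := Int.ModEq.sub_right 1 h1
        rw [show x + 1 - 1 = x from by ring] at h2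
        exact h2
      have hprevmem : (if (if 1 ≤ b then b else b + n) = 1 then n else (if 1 ≤ b then b else b + n) - 1) ∈ l :=
        hmem _ (by split_ifs <;> omega) (by split_ifs <;> omega)
      have hprevres : (if (if 1 ≤ b then b else b + n) = 1 then n
          else (if 1 ≤ b then b else b + n) - 1) % n = (b - 1) % n := by
        have e1 := hresprev (if 1 ≤ b then b else b + n) hbI.1
        have e2 : ((if 1 ≤ b then b else b + n) - 1) % n = (b - 1) % n := by
          have h3 : Int.ModEq n (if 1 ≤ b then b else b + n) b := hres_t b
          exact Int.ModEq.sub_right 1 h3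
        rw [e1, e2]
      have hxe : x = (if (if 1 ≤ b then b else b + n) = 1 then n else (if 1 ≤ b then b else b + n) - 1) :=
        hres x hx _ hprevmem (by rw [hxbr, ← hprevres])
      refine ⟨by omega, ?_⟩
      have hc2 : a - 1 - (((a - b).toNat - 1 : ℕ) : ℤ) = b := by omega
      rw [hc2]
      -- goal: indexOf (if 1 ≤ b then b else b + n) < indexOf x
      have hnotlt : ¬ l.idxOf (if (if 1 ≤ b then b else b + n) = 1 then n
          else (if 1 ≤ b then b else b + n) - 1) < l.idxOf (if 1 ≤ b then b else b + n) :=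
        fun hlt => hnotO _ hb ((horient' _ hbI.1 hbI.2).mpr hlt)
      have hbmem : (if 1 ≤ b then b else b + n) ∈ l := hmem _ hbI.1 hbI.2
      have hne : (if (if 1 ≤ b then b else b + n) = 1 then n else (if 1 ≤ b then b else b + n) - 1)
          ≠ (if 1 ≤ b then b else b + n) := by
        intro he
        exact hmodne (b - 1) b (by ring) (by rw [← hprevres, ← hres_t b, he])
      have hneidx : l.idxOf (if (if 1 ≤ b then b else b + n) = 1 then n
            else (if 1 ≤ b then b else b + n) - 1) ≠ l.idxOf (if 1 ≤ b then b else b + n) :=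
        fun he => hne ((List.idxOf_inj hprevmem).mp he)
      rw [hxe]
      omega
    · intro x hx hxr
      have hxe : x = a := hres x hx a (hmem a ha1 ha2) hxr
      refine ⟨by omega, ?_⟩
      rw [show a - 1 - ((0 : ℕ) : ℤ) = a - 1 from by push_cast; ring]
      have hprev : (if a = 1 then n else a - 1) = (if 1 ≤ a - 1 then a - 1 else a - 1 + n) := by
        split_ifs <;> omega
      have hprevmem : (if 1 ≤ a - 1 then a - 1 else a - 1 + n) ∈ l :=
        hmem _ (by split_ifs <;> omega) (by split_ifs <;> omega)
      have hamem : a ∈ l := hmem a ha1 ha2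
      have hnotlt : ¬ l.idxOf (if a = 1 then n else a - 1) < l.idxOf a :=
        fun hlt => hnotO a ha ((horient' a ha1 ha2).mpr hlt)
      rw [hprev] at hnotlt
      have hne : a ≠ (if 1 ≤ a - 1 then a - 1 else a - 1 + n) := by
        intro he
        have e2 : (if 1 ≤ a - 1 then a - 1 else a - 1 + n) % n = (a - 1) % n := hres_t (a - 1)
        exact hmodne (a - 1) a (by ring) (by rw [← e2, ← he])
      have hneidx : l.idxOf a ≠ l.idxOf (if 1 ≤ a - 1 then a - 1 else a - 1 + n) :=
        fun he => hne ((List.idxOf_inj hamem).mp he)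
      rw [hxe]
      omega
  rw [hkey]
  omega

set_option maxHeartbeats 8000000

/-- In the affine symmetric group (realized as periodic permutations of
`ℤ`), let `c` be the Coxeter element determined by a partition of `{1,…,n}` into a nonempty
set `Out` of outer points and a nonempty set `Inn` of inner points: `c` is the product of
the simple reflections `s_i = (i  i+1)_n` in an order in which `s_{i-1}` precedes `s_i`
exactly when `i` is outer (indices mod `n`, with `s_0 = s_n`).  Then, listing the outer
points in increasing order `a₁ < ⋯ < a_k` and the inner points in decreasing order
`b₁ > ⋯ > b_{n-k}`, `c` is the permutation with `c aᵢ = aᵢ₊₁` for `i < k`, `c a_k = a₁ + n`,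
`c bᵢ = bᵢ₊₁` for `i < n-k`, `c b_{n-k} = b₁ - n`, extended by `c (j + n) = c j + n`. -/
theorem coxeter_element_cycle_structure
    (n : ℤ) (hn : 2 ≤ n) (Out Inn : Finset ℤ)
    (hunion : Out ∪ Inn = Finset.Icc (1 : ℤ) n) (hdisj : Disjoint Out Inn)
    (hOut : Out.Nonempty) (hInn : Inn.Nonempty)
    (l : List ℤ) (hlnd : l.Nodup) (hlmem : ∀ x : ℤ, x ∈ l ↔ x ∈ Finset.Icc (1 : ℤ) n)
    (c : Equiv.Perm ℤ) (hc : c = (l.map fun i => reflN n i (i + 1)).prod)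
    (horient : ∀ i ∈ Finset.Icc (1 : ℤ) n,
      i ∈ Out ↔ l.idxOf (if i = 1 then n else i - 1) < l.idxOf i) :
    (∀ (t : ℕ) (h : t + 1 < (Out.sort (· ≤ ·)).length),
      c ((Out.sort (· ≤ ·))[t]'(by omega)) = (Out.sort (· ≤ ·))[t + 1]'h) ∧
    (∀ h : 0 < (Out.sort (· ≤ ·)).length,
      c ((Out.sort (· ≤ ·))[(Out.sort (· ≤ ·)).length - 1]'(by omega))
        = (Out.sort (· ≤ ·))[0]'h + n) ∧
    (∀ (t : ℕ) (h : t + 1 < ((Inn.sort (· ≤ ·)).reverse).length),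
      c (((Inn.sort (· ≤ ·)).reverse)[t]'(by omega))
        = ((Inn.sort (· ≤ ·)).reverse)[t + 1]'h) ∧
    (∀ h : 0 < ((Inn.sort (· ≤ ·)).reverse).length,
      c (((Inn.sort (· ≤ ·)).reverse)[((Inn.sort (· ≤ ·)).reverse).length - 1]'(by omega))
        = ((Inn.sort (· ≤ ·)).reverse)[0]'h - n) ∧
    (∀ j : ℤ, c (j + n) = c j + n) := by
  have hc' : ∀ x : ℤ, c x = l.foldr (Gfun n) x := by
    intro x; rw [hc]; exact prod_eq_foldr hn l x
  have hsubO : ∀ x ∈ Out, 1 ≤ x ∧ x ≤ n := by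
    intro x hx
    have hx2 : x ∈ Out ∪ Inn := Finset.mem_union_left _ hx
    rw [hunion, Finset.mem_Icc] at hx2
    exact hx2
  have hsubI : ∀ x ∈ Inn, 1 ≤ x ∧ x ≤ n := by
    intro x hx
    have hx2 : x ∈ Out ∪ Inn := Finset.mem_union_right _ hx
    rw [hunion, Finset.mem_Icc] at hx2
    exact hx2
  set A := Out.sort (· ≤ ·) with hA
  set S := Inn.sort (· ≤ ·) with hS
  simp only [← hA, ← hS]
  have hAs : List.Pairwise (· < ·) A := Out.sortedLT_sort.pairwise
  have hSs : List.Pairwise (· < ·) S := Inn.sortedLT_sort.pairwise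
  have hAmem : ∀ x : ℤ, x ∈ A ↔ x ∈ Out := fun x => Finset.mem_sort _
  have hSmem : ∀ x : ℤ, x ∈ S ↔ x ∈ Inn := fun x => Finset.mem_sort _
  have hAcomp : ∀ (i j : ℕ) (hi : i < A.length) (hj : j < A.length), i < j → A[i] < A[j] :=
    fun i j hi hj hij => List.pairwise_iff_getElem.mp hAs i j hi hj hij
  have hScomp : ∀ (i j : ℕ) (hi : i < S.length) (hj : j < S.length), i < j → S[i] < S[j] :=
    fun i j hi hj hij => List.pairwise_iff_getElem.mp hSs i j hi hj hij
  have hAle : ∀ (i j : ℕ) (hi : i < A.length) (hj : j < A.length), i ≤ j → A[i] ≤ A[j] := by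
    intro i j hi hj hij
    rcases Nat.eq_or_lt_of_le hij with h | h
    · subst h; exact le_rfl
    · exact le_of_lt (hAcomp i j hi hj h)
  have hSle : ∀ (i j : ℕ) (hi : i < S.length) (hj : j < S.length), i ≤ j → S[i] ≤ S[j] := by
    intro i j hi hj hij
    rcases Nat.eq_or_lt_of_le hij with h | h
    · subst h; exact le_rfl
    · exact le_of_lt (hScomp i j hi hj h)
  have hRcomp : ∀ (i j : ℕ) (hi : i < S.reverse.length) (hj : j < S.reverse.length),
      i < j → S.reverse[j] < S.reverse[i] := by
    have hp : S.reverse.Pairwise (fun a b => b < a) := List.pairwise_reverse.mpr hSs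
    intro i j hi hj hij
    exact List.pairwise_iff_getElem.mp hp i j hi hj hij
  have hRle : ∀ (i j : ℕ) (hi : i < S.reverse.length) (hj : j < S.reverse.length),
      i ≤ j → S.reverse[j] ≤ S.reverse[i] := by
    intro i j hi hj hij
    rcases Nat.eq_or_lt_of_le hij with h | h
    · subst h; exact le_rfl
    · exact le_of_lt (hRcomp i j hi hj h)
  have hRmem : ∀ x : ℤ, x ∈ S.reverse ↔ x ∈ Inn := fun x => (List.mem_reverse).trans (hSmem x)
  refine ⟨?_, ?_, ?_, ?_, ?_⟩
  · -- outer consecutive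
    intro t ht
    have ht' : t < A.length := by omega
    rw [hc']
    have hmt : A[t] ∈ Out := (hAmem _).mp (List.getElem_mem _)
    have hmt1 : A[t + 1] ∈ Out := (hAmem _).mp (List.getElem_mem _)
    obtain ⟨ha1, ha2⟩ := hsubO _ hmt
    obtain ⟨hb1, hb2⟩ := hsubO _ hmt1
    refine cox_step_up n hn Out Inn hunion l hlnd hlmem horient _ _ hmt ?_ ?_ ?_ ?_
    · rw [if_pos hb2]; exact hmt1
    · exact hAcomp t (t + 1) ht' ht (by omega)
    · omega
    · intro w hw1 hw2
      have hwn : w ≤ n := by omega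
      rw [if_pos hwn]
      intro hwO
      obtain ⟨s, hs, hws⟩ := List.mem_iff_getElem.mp ((hAmem w).mpr hwO)
      rcases Nat.lt_or_ge s (t + 1) with h | h
      · have h2 : A[s] ≤ A[t] := hAle s t hs ht' (by omega)
        omega
      · have h2 : A[t + 1] ≤ A[s] := hAle (t + 1) s ht hs h
        omega
  · -- outer wrap
    intro h0
    rw [hc']
    have hk : A.length - 1 < A.length := by omega
    have hmax : A[A.length - 1] ∈ Out := (hAmem _).mp (List.getElem_mem _)
    have hmin : A[0] ∈ Out := (hAmem _).mp (List.getElem_mem _)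
    obtain ⟨hx1, hx2⟩ := hsubO _ hmax
    obtain ⟨hy1, hy2⟩ := hsubO _ hmin
    have hmm : A[0]'h0 ≤ A[A.length - 1]'hk := hAle 0 (A.length - 1) h0 hk (by omega)
    refine cox_step_up n hn Out Inn hunion l hlnd hlmem horient _ _ hmax ?_ ?_ ?_ ?_
    · have he : (if A[0]'h0 + n ≤ n then A[0]'h0 + n else A[0]'h0 + n - n) = A[0]'h0 := by
        split_ifs <;> omega
      rw [he]; exact hmin
    · omega
    · omega
    · intro w hw1 hw2
      by_cases hwn : w ≤ n
      · rw [if_pos hwn]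
        intro hwO
        obtain ⟨s, hs, hws⟩ := List.mem_iff_getElem.mp ((hAmem w).mpr hwO)
        have h2 : A[s] ≤ A[A.length - 1] := hAle s (A.length - 1) hs hk (by omega)
        omega
      · rw [if_neg hwn]
        intro hwO
        obtain ⟨s, hs, hws⟩ := List.mem_iff_getElem.mp ((hAmem (w - n)).mpr hwO)
        have h2 : A[0] ≤ A[s] := hAle 0 s h0 hs (by omega)
        omega
  · -- inner consecutive
    intro t ht
    rw [hc']
    have ht' : t < S.reverse.length := by omega
    have hm0 : S.reverse[t] ∈ Inn := (hRmem _).mp (List.getElem_mem _)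
    have hm1 : S.reverse[t + 1] ∈ Inn := (hRmem _).mp (List.getElem_mem _)
    obtain ⟨ha1, ha2⟩ := hsubI _ hm0
    obtain ⟨hb1, hb2⟩ := hsubI _ hm1
    refine cox_step_down n hn Out Inn hunion hdisj l hlnd hlmem horient _ _ hm0 ?_ ?_ ?_ ?_
    · rw [if_pos hb1]; exact hm1
    · exact hRcomp t (t + 1) ht' ht (by omega)
    · omega
    · intro w hw1 hw2
      have hw1' : 1 ≤ w := by omega
      rw [if_pos hw1']
      intro hwI
      obtain ⟨s, hs, hws⟩ := List.mem_iff_getElem.mp ((hRmem w).mpr hwI)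
      rcases Nat.lt_or_ge s (t + 1) with h | h
      · have h2 : S.reverse[t] ≤ S.reverse[s] := hRle s t hs ht' (by omega)
        omega
      · have h2 : S.reverse[s] ≤ S.reverse[t + 1] := hRle (t + 1) s ht hs h
        omega
  · -- inner wrap
    intro h0
    rw [hc']
    have hkR : S.reverse.length - 1 < S.reverse.length := by omega
    have hmin : S.reverse[S.reverse.length - 1] ∈ Inn := (hRmem _).mp (List.getElem_mem _)
    have hmax : S.reverse[0] ∈ Inn := (hRmem _).mp (List.getElem_mem _)
    obtain ⟨hx1, hx2⟩ := hsubI _ hmin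
    obtain ⟨hy1, hy2⟩ := hsubI _ hmax
    have hmm : S.reverse[S.reverse.length - 1]'hkR ≤ S.reverse[0]'h0 :=
      hRle 0 (S.reverse.length - 1) h0 hkR (by omega)
    refine cox_step_down n hn Out Inn hunion hdisj l hlnd hlmem horient _ _ hmin ?_ ?_ ?_ ?_
    · have he : (if (1 : ℤ) ≤ S.reverse[0]'h0 - n then S.reverse[0]'h0 - n
          else S.reverse[0]'h0 - n + n) = S.reverse[0]'h0 := by
        split_ifs <;> omega
      rw [he]; exact hmax
    · omega
    · omega
    · intro w hw1 hw2
      by_cases h1w : 1 ≤ w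
      · rw [if_pos h1w]
        intro hwI
        obtain ⟨s, hs, hws⟩ := List.mem_iff_getElem.mp ((hRmem w).mpr hwI)
        have h2 : S.reverse[S.reverse.length - 1] ≤ S.reverse[s] :=
          hRle s (S.reverse.length - 1) hs hkR (by omega)
        omega
      · rw [if_neg h1w]
        intro hwI
        obtain ⟨s, hs, hws⟩ := List.mem_iff_getElem.mp ((hRmem (w + n)).mpr hwI)
        have h2 : S.reverse[s] ≤ S.reverse[0] := hRle 0 s h0 hs (by omega)
        omega
  · -- periodicity
    intro j
    rw [hc', hc']
    exact foldr_shift l j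
end

section
/- Let π be a periodic permutation of ℤ (π(i+n) = π(i)+n) and let τ be either a reflection (i j)_n with i ≢ j mod n, or a loop ℓ_a^{±1} (the permutation sending a+kn to a+(k±1)n for all k and fixing all other integers). Then the number of mod-n equivalence classes of finite cycles of τπ is at most one more than the number of mod-n equivalence classes of finite cycles of π. -/
lemma emod_add_n (x n : ℤ) : (x + n) % n = x % n := by
  rw [show x + n = x + n * 1 by ring, Int.add_mul_emod_self_left]

lemma emod_sub_n (x n : ℤ) : (x - n) % n = x % n := by
  rw [show x - n = x + n * (-1) by ring, Int.add_mul_emod_self_left]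

/-- The loop `ℓ_a`: the periodic permutation sending `i` to `i + n` when `i ≡ a (mod n)`
and fixing all other integers. -/
def loopP (n a : ℤ) : Equiv.Perm ℤ where
  toFun x := if x % n = a % n then x + n else x
  invFun x := if x % n = a % n then x - n else x
  left_inv x := by
    by_cases h : x % n = a % n
    · simp only [if_pos h, emod_add_n, if_pos h]; ring
    · simp only [if_neg h, if_neg h]
  right_inv x := by
    by_cases h : x % n = a % n
    · simp only [if_pos h, emod_sub_n, if_pos h]; ring
    · simp only [if_neg h, if_neg h]

/-- The orbit of `x` under the permutation `π` (the cycle of `π` through `x`). -/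
def permOrbit (π : Equiv.Perm ℤ) (x : ℤ) : Set ℤ := Set.range fun k : ℤ => (π ^ k) x

/-- Two points with finite `π`-orbit lie in the same mod-`n` class of finite cycles of `π`
when some power of `π` carries one to the other up to an integer multiple of `n`. -/
def sameFinCycleClass (n : ℤ) (π : Equiv.Perm ℤ)
    (x y : {x : ℤ // (permOrbit π x).Finite}) : Prop :=
  ∃ k m : ℤ, (π ^ k) x.val = y.val + m * n

/-- The number of mod-`n` classes of finite cycles of `π`. -/
noncomputable def finCycleClassCount (n : ℤ) (π : Equiv.Perm ℤ) : ℕ :=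
  Nat.card (Quot (sameFinCycleClass n π))

namespace Aux12

/-- periodicity -/
def PP (n : ℤ) (f : Equiv.Perm ℤ) : Prop := ∀ i, f (i + n) = f i + n

lemma zpow_apply_add (f : Equiv.Perm ℤ) (j k : ℤ) (x : ℤ) :
    (f ^ (j + k)) x = (f ^ j) ((f ^ k) x) := by
  rw [zpow_add, Equiv.Perm.mul_apply]

lemma perm_apply_inv_self (f : Equiv.Perm ℤ) (x : ℤ) : f (f⁻¹ x) = x :=
  (Equiv.eq_symm_apply f).mp rfl

lemma perm_inv_apply_self (f : Equiv.Perm ℤ) (x : ℤ) : f⁻¹ (f x) = x :=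
  Equiv.Perm.inv_eq_iff_eq.mpr rfl

lemma PP.inv {n : ℤ} {f : Equiv.Perm ℤ} (hf : PP n f) : PP n f⁻¹ := by
  intro i
  apply f.injective
  rw [perm_apply_inv_self, hf, perm_apply_inv_self]

lemma PP.mul {n : ℤ} {f g : Equiv.Perm ℤ} (hf : PP n f) (hg : PP n g) : PP n (f * g) := by
  intro i; rw [Equiv.Perm.mul_apply, hg, hf, Equiv.Perm.mul_apply]

lemma PP.pow {n : ℤ} {f : Equiv.Perm ℤ} (hf : PP n f) (m : ℕ) : PP n (f ^ m) := by
  induction m with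
  | zero => intro i; simp
  | succ m ih => rw [pow_succ]; exact ih.mul hf

lemma PP.zpow {n : ℤ} {f : Equiv.Perm ℤ} (hf : PP n f) (k : ℤ) : PP n (f ^ k) := by
  cases k with
  | ofNat m => rw [Int.ofNat_eq_coe, zpow_natCast]; exact hf.pow m
  | negSucc m => rw [zpow_negSucc]; exact (hf.pow (m + 1)).inv

lemma PP.shift {n : ℤ} {f : Equiv.Perm ℤ} (hf : PP n f) (x m : ℤ) :
    f (x + m * n) = f x + m * n := by
  have hsub : ∀ y : ℤ, f (y - n) = f y - n := by
    intro y
    have := hf (y - n)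
    rw [sub_add_cancel] at this
    omega
  induction m using Int.induction_on with
  | zero => simp
  | succ m ih =>
    have : x + (m + 1 : ℤ) * n = (x + m * n) + n := by ring
    rw [this, hf, ih]; ring
  | pred m ih =>
    have : x + (-m - 1 : ℤ) * n = (x + (-m) * n) - n := by ring
    rw [this, hsub, ih]; ring

/-- orbits -/
lemma mem_orbit_iff {σ : Equiv.Perm ℤ} {x y : ℤ} :
    y ∈ permOrbit σ x ↔ ∃ k : ℤ, (σ ^ k) x = y := Iff.rfl

lemma self_mem_orbit (σ : Equiv.Perm ℤ) (x : ℤ) : x ∈ permOrbit σ x := ⟨0, rfl⟩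

lemma zpow_mem_orbit (σ : Equiv.Perm ℤ) (x : ℤ) (k : ℤ) : (σ ^ k) x ∈ permOrbit σ x :=
  ⟨k, rfl⟩

lemma orbit_zpow_eq (σ : Equiv.Perm ℤ) (x : ℤ) (j : ℤ) :
    permOrbit σ ((σ ^ j) x) = permOrbit σ x := by
  ext y
  constructor
  · rintro ⟨k, rfl⟩; exact ⟨k + j, zpow_apply_add σ k j x⟩
  · rintro ⟨k, rfl⟩
    refine ⟨k - j, ?_⟩
    show (σ ^ (k - j)) ((σ ^ j) x) = (σ ^ k) x
    rw [← zpow_apply_add, sub_add_cancel]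

lemma orbit_translate {n : ℤ} {σ : Equiv.Perm ℤ} (hσ : PP n σ) (x m : ℤ) :
    permOrbit σ (x + m * n) = (fun z => z + m * n) '' permOrbit σ x := by
  ext y
  constructor
  · rintro ⟨k, rfl⟩
    exact ⟨(σ ^ k) x, ⟨k, rfl⟩, ((hσ.zpow k).shift x m).symm⟩
  · rintro ⟨z, ⟨k, rfl⟩, rfl⟩
    exact ⟨k, (hσ.zpow k).shift x m⟩

lemma orbit_translate_finite {n : ℤ} {σ : Equiv.Perm ℤ} (hσ : PP n σ) {x : ℤ} (m : ℤ)
    (h : (permOrbit σ x).Finite) : (permOrbit σ (x + m * n)).Finite := by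
  rw [orbit_translate hσ]; exact h.image _

/-- if a finite σ-orbit of x contains w + k*n then σ-orbit of w is finite -/
lemma finite_orbit_of_translate_mem {n : ℤ} {σ : Equiv.Perm ℤ} (hσ : PP n σ) {x w k j : ℤ}
    (hfin : (permOrbit σ x).Finite) (h : (σ ^ j) x = w + k * n) :
    (permOrbit σ w).Finite := by
  have h1 : (permOrbit σ (w + k * n)).Finite := by
    rw [← h, orbit_zpow_eq]; exact hfin
  have := orbit_translate_finite hσ (-k) h1
  rwa [show w + k * n + -k * n = w by ring] at this

/-- no nontrivial self-translate in a finite orbit -/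
lemma no_self_translate {n : ℤ} (hn : 2 ≤ n) {σ : Equiv.Perm ℤ} (hσ : PP n σ) {x k j : ℤ}
    (hfin : (permOrbit σ x).Finite) (h : (σ ^ j) x = x + k * n) (hk : k ≠ 0) : False := by
  have key : ∀ m : ℕ, (σ ^ (m * j)) x = x + (m * k) * n := by
    intro m
    induction m with
    | zero => simp
    | succ m ih =>
      have : ((m : ℤ) + 1) * j = m * j + j := by ring
      push_cast
      rw [this, zpow_apply_add, h, (hσ.zpow (m * j)).shift, ih]
      ring
  have hinj : Function.Injective (fun m : ℕ => x + (m * k) * n) := by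
    intro a b hab
    simp only at hab
    have hkn : k * n ≠ 0 := mul_ne_zero hk (by omega)
    have : (a : ℤ) * k * n = b * k * n := by omega
    have : (a : ℤ) * (k * n) = b * (k * n) := by ring_nf; ring_nf at this; omega
    have := mul_right_cancel₀ hkn this
    exact_mod_cast this
  exact (Set.infinite_of_injective_forall_mem hinj
    (fun m => by rw [← key m]; exact zpow_mem_orbit σ x _)) hfin


section Equiv12
variable {n : ℤ} {σ : Equiv.Perm ℤ}

lemma R_refl (hσ : PP n σ) (x : {x : ℤ // (permOrbit σ x).Finite}) :
    sameFinCycleClass n σ x x := ⟨0, 0, by simp⟩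

lemma R_symm (hσ : PP n σ) {x y : {x : ℤ // (permOrbit σ x).Finite}}
    (h : sameFinCycleClass n σ x y) : sameFinCycleClass n σ y x := by
  obtain ⟨k, m, hk⟩ := h
  refine ⟨-k, -m, ?_⟩
  have : (σ ^ (-k)) ((σ ^ k) x.val) = x.val := by
    rw [← zpow_apply_add]; simp
  rw [hk, (hσ.zpow (-k)).shift] at this
  linarith

lemma R_trans (hσ : PP n σ) {x y z : {x : ℤ // (permOrbit σ x).Finite}}
    (h1 : sameFinCycleClass n σ x y) (h2 : sameFinCycleClass n σ y z) :
    sameFinCycleClass n σ x z := by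
  obtain ⟨k, m, hk⟩ := h1
  obtain ⟨j, p, hj⟩ := h2
  refine ⟨j + k, p + m, ?_⟩
  rw [zpow_apply_add, hk, (hσ.zpow j).shift, hj]
  ring

lemma R_equivalence (hσ : PP n σ) : Equivalence (sameFinCycleClass n σ) :=
  ⟨R_refl hσ, R_symm hσ, R_trans hσ⟩

lemma R_of_quot_eq (hσ : PP n σ) {x y : {x : ℤ // (permOrbit σ x).Finite}}
    (h : Quot.mk (sameFinCycleClass n σ) x = Quot.mk (sameFinCycleClass n σ) y) :
    sameFinCycleClass n σ x y :=
  ((R_equivalence hσ).eqvGen_iff).mp (Quot.eq.mp h)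

/-- finiteness of the set of classes -/
lemma quot_finite (hn : 2 ≤ n) (hσ : PP n σ) : Finite (Quot (sameFinCycleClass n σ)) := by
  classical
  set F : {x : ℤ // (permOrbit σ x).Finite} → Set (Fin n.toNat) :=
    fun x => {r | ∃ k m : ℤ, (σ ^ k) x.val = (r.val : ℤ) + m * n} with hF
  have hmono : ∀ x y, sameFinCycleClass n σ x y → F y ⊆ F x := by
    rintro x y ⟨j, m₀, hj⟩ r ⟨k, m, hk⟩
    refine ⟨k + j, m + m₀, ?_⟩
    rw [zpow_apply_add, hj, (hσ.zpow k).shift, hk]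
    ring
  have hinv : ∀ x y, sameFinCycleClass n σ x y → F x = F y := by
    intro x y h
    exact le_antisymm (hmono y x (R_symm hσ h)) (hmono x y h)
  set G : Quot (sameFinCycleClass n σ) → Set (Fin n.toNat) :=
    Quot.lift F hinv with hG
  have hinj : Function.Injective G := by
    rintro ⟨x⟩ ⟨y⟩ h
    change F x = F y at h
    have hn0 : (0:ℤ) < n := by omega
    have hr : ((x.val % n).toNat : ℤ) = x.val % n :=
      Int.toNat_of_nonneg (Int.emod_nonneg _ (by omega))
    have hrlt : (x.val % n).toNat < n.toNat := by
      have := Int.emod_lt_of_pos x.val hn0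
      omega
    have hx : (⟨(x.val % n).toNat, hrlt⟩ : Fin n.toNat) ∈ F x := by
      refine ⟨0, x.val / n, ?_⟩
      simp only [zpow_zero, Equiv.Perm.coe_one, id_eq]
      rw [hr]
      linear_combination (Int.emod_add_mul_ediv x.val n).symm
    rw [h] at hx
    obtain ⟨k, m, hk⟩ := hx
    simp only [hr] at hk
    have : sameFinCycleClass n σ y x := by
      refine ⟨k, m - x.val / n, ?_⟩
      rw [hk]
      linear_combination Int.emod_add_mul_ediv x.val n
    exact Quot.sound (R_symm hσ this)
  exact Finite.of_injective G hinj

end Equiv12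


section AvoidM
variable {n : ℤ} {σ π : Equiv.Perm ℤ} {M : Set ℤ}

/-- `x`'s σ-orbit avoids `M`. -/
def Avoids (σ : Equiv.Perm ℤ) (M : Set ℤ) (x : ℤ) : Prop :=
  ∀ y ∈ permOrbit σ x, y ∉ M

lemma agree_zpow (hagree : ∀ x, x ∉ M → σ x = π x) {x : ℤ} (hx : Avoids σ M x) :
    ∀ k : ℤ, (π ^ k) x = (σ ^ k) x := by
  have hinv : ∀ y ∈ permOrbit σ x, π⁻¹ y = σ⁻¹ y := by
    rintro y ⟨k, rfl⟩
    have hz : (σ ^ (k - 1)) x ∈ permOrbit σ x := zpow_mem_orbit σ x _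
    have hzM : (σ ^ (k - 1)) x ∉ M := hx _ hz
    have hπz : π ((σ ^ (k - 1)) x) = (σ ^ k) x := by
      rw [← hagree _ hzM]
      have : (σ ^ k) x = (σ ^ (1 + (k - 1))) x := by ring_nf
      rw [this, zpow_apply_add, zpow_one]
    have hσz : σ ((σ ^ (k - 1)) x) = (σ ^ k) x := by
      have : (σ ^ k) x = (σ ^ (1 + (k - 1))) x := by ring_nf
      rw [this, zpow_apply_add, zpow_one]
    apply_fun π⁻¹ at hπz
    apply_fun σ⁻¹ at hσz
    simp only [perm_inv_apply_self] at hπz hσz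
    rw [← hπz, hσz]
  intro k
  induction k using Int.induction_on with
  | zero => simp
  | succ k ih =>
    have h1 : (π ^ ((k : ℤ) + 1)) x = π ((π ^ (k : ℤ)) x) := by
      rw [show (k : ℤ) + 1 = 1 + k by ring, zpow_apply_add, zpow_one]
    have h2 : (σ ^ ((k : ℤ) + 1)) x = σ ((σ ^ (k : ℤ)) x) := by
      rw [show (k : ℤ) + 1 = 1 + k by ring, zpow_apply_add, zpow_one]
    rw [h1, h2, ih, hagree _ (hx _ (zpow_mem_orbit σ x k))]
  | pred k ih =>
    have h1 : (π ^ (-(k : ℤ) - 1)) x = π⁻¹ ((π ^ (-(k : ℤ))) x) := by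
      rw [show (-(k : ℤ) - 1) = -1 + -k by ring, zpow_apply_add, zpow_neg_one]
    have h2 : (σ ^ (-(k : ℤ) - 1)) x = σ⁻¹ ((σ ^ (-(k : ℤ))) x) := by
      rw [show (-(k : ℤ) - 1) = -1 + -k by ring, zpow_apply_add, zpow_neg_one]
    rw [h1, h2, ih, hinv _ (zpow_mem_orbit σ x (-k))]

lemma orbit_eq_of_avoids (hagree : ∀ x, x ∉ M → σ x = π x) {x : ℤ} (hx : Avoids σ M x) :
    permOrbit π x = permOrbit σ x := by
  ext y
  constructor
  · rintro ⟨k, rfl⟩; exact ⟨k, (agree_zpow hagree hx k).symm⟩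
  · rintro ⟨k, rfl⟩; exact ⟨k, agree_zpow hagree hx k⟩

lemma avoids_of_R (hσ : PP n σ) (hM : ∀ x ∈ M, ∀ m : ℤ, x + m * n ∈ M)
    {x y : {x : ℤ // (permOrbit σ x).Finite}} (hR : sameFinCycleClass n σ x y)
    (hx : Avoids σ M x.val) : Avoids σ M y.val := by
  obtain ⟨k, m, hk⟩ := hR
  rintro z ⟨j, rfl⟩ hzM
  have h1 : (σ ^ j) y.val = (σ ^ (j + k)) x.val + (-m) * n := by
    rw [zpow_apply_add, hk, (hσ.zpow j).shift]
    ring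
  have h2 : (σ ^ j) y.val + m * n ∈ M := hM _ hzM m
  have h3 : (σ ^ (j + k)) x.val = (σ ^ j) y.val + m * n := by linarith
  exact hx _ (zpow_mem_orbit σ x.val (j + k)) (h3 ▸ h2)

end AvoidM


section Merge
variable {n : ℤ} {σ π : Equiv.Perm ℤ} {M : Set ℤ}

lemma R_transfer (hagree : ∀ x, x ∉ M → σ x = π x)
    {x : ℤ} (hx : Avoids σ M x) {y k m : ℤ} :
    (σ ^ k) x = y + m * n ↔ (π ^ k) x = y + m * n := by
  rw [agree_zpow hagree hx k]

/-- finiteness of π-orbit from a finite forward-invariant set -/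
lemma finite_orbit_of_invariant {T : Set ℤ} (hT : T.Finite) (hmaps : ∀ y ∈ T, π y ∈ T)
    {u : ℤ} (hu : u ∈ T) : (permOrbit π u).Finite := by
  classical
  have hmem : ∀ m : ℕ, (π ^ (m : ℤ)) u ∈ T := by
    intro m
    induction m with
    | zero => simpa using hu
    | succ m ih =>
      have : ((m : ℤ) + 1) = 1 + m := by ring
      push_cast
      rw [this, zpow_apply_add, zpow_one]
      exact hmaps _ ih
  -- find a repeat
  have hnotinj : ¬ Function.Injective (fun m : ℕ => (π ^ (m : ℤ)) u) := by
    intro hinj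
    exact (Set.infinite_of_injective_forall_mem hinj hmem) hT
  rw [Function.not_injective_iff] at hnotinj
  obtain ⟨a, b, hab, hne⟩ := hnotinj
  wlog hlt : b < a generalizing a b
  · exact this b a hab.symm (Ne.symm hne) (by omega)
  set p : ℤ := (a : ℤ) - b with hp
  have hppos : 0 < p := by omega
  have hfix : (π ^ p) u = u := by
    have h1 : (π ^ (a : ℤ)) u = (π ^ (p + (b : ℤ))) u := by rw [show p + (b:ℤ) = a by omega]
    rw [zpow_apply_add] at h1
    have h2 : (π ^ p) ((π ^ (b : ℤ)) u) = (π ^ (b:ℤ)) u := by rw [← h1, hab]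
    have h4 : (π ^ p) u = (π ^ (-(b:ℤ))) ((π ^ p) ((π ^ (b:ℤ)) u)) := by
      rw [← zpow_apply_add, ← zpow_apply_add, show -(b:ℤ) + p + b = p by ring]
    rw [h4, h2, ← zpow_apply_add, show -(b:ℤ) + b = 0 by ring, zpow_zero]
    rfl
  -- orbit ⊆ image of [0, p)
  have hsub : permOrbit π u ⊆ (fun r : ℤ => (π ^ r) u) '' (Set.Icc 0 p) := by
    rintro y ⟨k, rfl⟩
    refine ⟨k % p, ⟨Int.emod_nonneg k (by omega), le_of_lt (Int.emod_lt_of_pos k hppos)⟩, ?_⟩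
    have hfixq : ∀ q : ℤ, (π ^ (p * q)) u = u := by
      intro q
      have : (π ^ (p * q)) = ((π ^ p) ^ q) := by rw [← zpow_mul]
      rw [this]
      exact Function.IsFixedPt.perm_zpow hfix q
    have hk : k = k % p + p * (k / p) := by
      have := Int.emod_add_mul_ediv k p; omega
    calc (π ^ (k % p)) u = (π ^ (k % p)) ((π ^ (p * (k/p))) u) := by rw [hfixq]
      _ = (π ^ (k % p + p * (k/p))) u := by rw [zpow_apply_add]
      _ = (π ^ k) u := by rw [← hk]
  exact Set.Finite.subset ((Set.finite_Icc 0 p).image _) hsub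

end Merge


section Merge2
variable {n : ℤ} {σ π : Equiv.Perm ℤ} {M : Set ℤ}

lemma apply_mem_orbit (σ : Equiv.Perm ℤ) {x y : ℤ} (h : y ∈ permOrbit σ x) :
    σ y ∈ permOrbit σ x := by
  obtain ⟨k, rfl⟩ := h
  refine ⟨1 + k, ?_⟩
  show (σ ^ (1 + k)) x = σ ((σ ^ k) x)
  rw [zpow_apply_add, zpow_one]

lemma merge_finite (hn : 2 ≤ n) (hσ : PP n σ) (hagree : ∀ x, x ∉ M → σ x = π x)
    {u v : ℤ} (hufin : (permOrbit σ u).Finite) (hvfin : (permOrbit σ v).Finite)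
    (hnR : ¬ sameFinCycleClass n σ ⟨u, hufin⟩ ⟨v, hvfin⟩)
    (hMchar : ∀ x ∈ M, ∃ k : ℤ, x = u + k * n ∨ x = v + k * n)
    (hπu : π u = σ v) (hπv : π v = σ u) :
    (permOrbit π u).Finite := by
  set T : Set ℤ := permOrbit σ u ∪ permOrbit σ v with hT
  have hTfin : T.Finite := hufin.union hvfin
  have hmaps : ∀ y ∈ T, π y ∈ T := by
    intro y hy
    by_cases hyM : y ∈ M
    · obtain ⟨k, hk | hk⟩ := hMchar y hyM
      · -- y = u + k*n
        rcases hy with hyu | hyv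
        · obtain ⟨j, hj⟩ := hyu
          rw [hk] at hj
          by_cases hk0 : k = 0
          · subst hk0
            simp only [zero_mul, add_zero] at hk
            subst hk
            rw [hπu]
            exact Or.inr (apply_mem_orbit σ (self_mem_orbit σ v))
          · exact absurd (no_self_translate hn hσ hufin hj hk0) (fun h => h)
        · obtain ⟨j, hj⟩ := hyv
          rw [hk] at hj
          exact absurd (R_symm hσ ⟨j, k, hj⟩) hnR
      · -- y = v + k*n
        rcases hy with hyu | hyv
        · obtain ⟨j, hj⟩ := hyu
          rw [hk] at hj
          exact absurd ⟨j, k, hj⟩ hnR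
        · obtain ⟨j, hj⟩ := hyv
          rw [hk] at hj
          by_cases hk0 : k = 0
          · subst hk0
            simp only [zero_mul, add_zero] at hk
            subst hk
            rw [hπv]
            exact Or.inl (apply_mem_orbit σ (self_mem_orbit σ u))
          · exact absurd (no_self_translate hn hσ hvfin hj hk0) (fun h => h)
    · rw [← hagree y hyM]
      rcases hy with hyu | hyv
      · exact Or.inl (apply_mem_orbit σ hyu)
      · exact Or.inr (apply_mem_orbit σ hyv)
  exact finite_orbit_of_invariant hTfin hmaps (Or.inl (self_mem_orbit σ u))

end Merge2


section Count
variable {n : ℤ} {σ π : Equiv.Perm ℤ} {M : Set ℤ}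

lemma card_option_aux (α : Type) [Finite α] : Nat.card (Option α) = Nat.card α + 1 := by
  have := Fintype.ofFinite α
  simp [Nat.card_eq_fintype_card]

/-- transfer a σ-relation to a π-relation for an avoiding point -/
lemma Rpi_of_Rsigma (hagree : ∀ x, x ∉ M → σ x = π x)
    {x y : {x : ℤ // (permOrbit σ x).Finite}} (hx : Avoids σ M x.val)
    (hfx : (permOrbit π x.val).Finite) (hfy : (permOrbit π y.val).Finite)
    (h : sameFinCycleClass n σ x y) :
    sameFinCycleClass n π ⟨x.val, hfx⟩ ⟨y.val, hfy⟩ := by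
  obtain ⟨k, m, hk⟩ := h
  exact ⟨k, m, by rw [agree_zpow hagree hx k]; exact hk⟩

lemma Rsigma_of_Rpi (hagree : ∀ x, x ∉ M → σ x = π x)
    {x y : {x : ℤ // (permOrbit σ x).Finite}} (hx : Avoids σ M x.val)
    {hfx : (permOrbit π x.val).Finite} {hfy : (permOrbit π y.val).Finite}
    (h : sameFinCycleClass n π ⟨x.val, hfx⟩ ⟨y.val, hfy⟩) :
    sameFinCycleClass n σ x y := by
  obtain ⟨k, m, hk⟩ := h
  exact ⟨k, m, by rw [← agree_zpow hagree hx k]; exact hk⟩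

lemma count_scenario_C (hn : 2 ≤ n) (hσ : PP n σ) (hπ : PP n π)
    (hagree : ∀ x, x ∉ M → σ x = π x)
    (hM : ∀ x ∈ M, ∀ m : ℤ, x + m * n ∈ M)
    (w₁ w₂ : {x : ℤ // (permOrbit σ x).Finite})
    (hC : ∀ x : {x : ℤ // (permOrbit σ x).Finite},
      Avoids σ M x.val ∨ sameFinCycleClass n σ x w₁ ∨ sameFinCycleClass n σ x w₂)
    (hπfin : (permOrbit π w₁.val).Finite)
    (hw₁M : w₁.val ∈ M) :
    finCycleClassCount n σ ≤ finCycleClassCount n π + 1 := by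
  classical
  haveI hQfin : Finite (Quot (sameFinCycleClass n π)) := quot_finite hn hπ
  -- avoiding points have π-finite orbits
  have hav_fin : ∀ x : {x : ℤ // (permOrbit σ x).Finite}, Avoids σ M x.val →
      (permOrbit π x.val).Finite := by
    intro x hx
    rw [orbit_eq_of_avoids hagree hx]
    exact x.prop
  set g : {x : ℤ // (permOrbit σ x).Finite} → Option (Quot (sameFinCycleClass n π)) :=
    fun x =>
      if sameFinCycleClass n σ x w₁ then
        some (Quot.mk _ ⟨w₁.val, hπfin⟩)
      else if sameFinCycleClass n σ x w₂ then none
      else if hx : Avoids σ M x.val then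
        some (Quot.mk _ ⟨x.val, hav_fin x hx⟩)
      else none with hg
  -- key: the class of w₁ in π is distinct from classes of avoiding points
  have hkey : ∀ x : {x : ℤ // (permOrbit σ x).Finite}, Avoids σ M x.val →
      ∀ hfx : (permOrbit π x.val).Finite,
      ¬ sameFinCycleClass n π ⟨w₁.val, hπfin⟩ ⟨x.val, hfx⟩ := by
    rintro x hx hfx ⟨k, m, hk⟩
    have h1 : (π ^ (-k)) ((π ^ k) w₁.val) = w₁.val := by
      rw [← zpow_apply_add]; simp
    rw [hk, (hπ.zpow (-k)).shift] at h1
    have h2 : (π ^ (-k)) x.val = (σ ^ (-k)) x.val := agree_zpow hagree hx (-k)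
    have h3 : (σ ^ (-k)) x.val ∈ M := by
      rw [← h2]
      have : (π ^ (-k)) x.val = w₁.val + (-m) * n := by linarith
      rw [this]
      exact hM _ hw₁M (-m)
    exact hx _ (zpow_mem_orbit σ x.val (-k)) h3
  have hwd : ∀ x y, sameFinCycleClass n σ x y → g x = g y := by
    intro x y hxy
    by_cases h1 : sameFinCycleClass n σ x w₁
    · have h1y : sameFinCycleClass n σ y w₁ := R_trans hσ (R_symm hσ hxy) h1
      simp only [hg, if_pos h1, if_pos h1y]
    · have h1y : ¬ sameFinCycleClass n σ y w₁ := fun h => h1 (R_trans hσ hxy h)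
      by_cases h2 : sameFinCycleClass n σ x w₂
      · have h2y : sameFinCycleClass n σ y w₂ := R_trans hσ (R_symm hσ hxy) h2
        simp only [hg, if_neg h1, if_neg h1y, if_pos h2, if_pos h2y]
      · have h2y : ¬ sameFinCycleClass n σ y w₂ := fun h => h2 (R_trans hσ hxy h)
        have hx : Avoids σ M x.val := (hC x).resolve_right (fun h => h.elim h1 h2)
        have hy : Avoids σ M y.val := avoids_of_R hσ hM hxy hx
        simp only [hg, if_neg h1, if_neg h1y, if_neg h2, if_neg h2y, dif_pos hx, dif_pos hy]
        congr 1
        exact Quot.sound (Rpi_of_Rsigma hagree hx _ _ hxy)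
  set f : Quot (sameFinCycleClass n σ) → Option (Quot (sameFinCycleClass n π)) :=
    Quot.lift g hwd with hf
  have hinj : Function.Injective f := by
    rintro ⟨x⟩ ⟨y⟩ h
    change g x = g y at h
    apply Quot.sound
    by_cases h1x : sameFinCycleClass n σ x w₁ <;>
    by_cases h1y : sameFinCycleClass n σ y w₁
    · exact R_trans hσ h1x (R_symm hσ h1y)
    · -- x in branch 1, y not
      exfalso
      by_cases h2y : sameFinCycleClass n σ y w₂
      · simp only [hg, if_pos h1x, if_neg h1y, if_pos h2y] at h
        cases h
      · have hy : Avoids σ M y.val := (hC y).resolve_right (fun h => h.elim h1y h2y)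
        simp only [hg, if_pos h1x, if_neg h1y, if_neg h2y, dif_pos hy,
          Option.some.injEq] at h
        exact hkey y hy (hav_fin y hy) (R_of_quot_eq hπ h)
    · exfalso
      by_cases h2x : sameFinCycleClass n σ x w₂
      · simp only [hg, if_pos h1y, if_neg h1x, if_pos h2x] at h
        cases h
      · have hx : Avoids σ M x.val := (hC x).resolve_right (fun h => h.elim h1x h2x)
        simp only [hg, if_pos h1y, if_neg h1x, if_neg h2x, dif_pos hx,
          Option.some.injEq] at h
        exact hkey x hx (hav_fin x hx) (R_of_quot_eq hπ h.symm)
    · by_cases h2x : sameFinCycleClass n σ x w₂ <;>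
      by_cases h2y : sameFinCycleClass n σ y w₂
      · exact R_trans hσ h2x (R_symm hσ h2y)
      · exfalso
        have hy : Avoids σ M y.val := (hC y).resolve_right (fun h => h.elim h1y h2y)
        simp only [hg, if_neg h1x, if_neg h1y, if_pos h2x, if_neg h2y, dif_pos hy] at h
        cases h
      · exfalso
        have hx : Avoids σ M x.val := (hC x).resolve_right (fun h => h.elim h1x h2x)
        simp only [hg, if_neg h1x, if_neg h1y, if_pos h2y, if_neg h2x, dif_pos hx] at h
        cases h
      · have hx : Avoids σ M x.val := (hC x).resolve_right (fun h => h.elim h1x h2x)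
        have hy : Avoids σ M y.val := (hC y).resolve_right (fun h => h.elim h1y h2y)
        simp only [hg, if_neg h1x, if_neg h1y, if_neg h2x, if_neg h2y, dif_pos hx,
          dif_pos hy, Option.some.injEq] at h
        exact Rsigma_of_Rpi hagree hx (R_of_quot_eq hπ h)
  haveI : Finite (Option (Quot (sameFinCycleClass n π))) := by
    have := Fintype.ofFinite (Quot (sameFinCycleClass n π)); infer_instance
  calc finCycleClassCount n σ
      ≤ Nat.card (Option (Quot (sameFinCycleClass n π))) :=
        Nat.card_le_card_of_injective f hinj
    _ = finCycleClassCount n π + 1 := card_option_aux _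

end Count


section Count2
variable {n : ℤ} {σ π : Equiv.Perm ℤ} {M : Set ℤ}

lemma count_scenario_B (hn : 2 ≤ n) (hσ : PP n σ) (hπ : PP n π)
    (hagree : ∀ x, x ∉ M → σ x = π x)
    (hM : ∀ x ∈ M, ∀ m : ℤ, x + m * n ∈ M)
    (w : {x : ℤ // (permOrbit σ x).Finite})
    (hB : ∀ x : {x : ℤ // (permOrbit σ x).Finite},
      Avoids σ M x.val ∨ sameFinCycleClass n σ x w) :
    finCycleClassCount n σ ≤ finCycleClassCount n π + 1 := by
  classical
  haveI hQfin : Finite (Quot (sameFinCycleClass n π)) := quot_finite hn hπ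
  have hav_fin : ∀ x : {x : ℤ // (permOrbit σ x).Finite}, Avoids σ M x.val →
      (permOrbit π x.val).Finite := by
    intro x hx
    rw [orbit_eq_of_avoids hagree hx]
    exact x.prop
  set g : {x : ℤ // (permOrbit σ x).Finite} → Option (Quot (sameFinCycleClass n π)) :=
    fun x =>
      if sameFinCycleClass n σ x w then none
      else if hx : Avoids σ M x.val then
        some (Quot.mk _ ⟨x.val, hav_fin x hx⟩)
      else none with hg
  have hwd : ∀ x y, sameFinCycleClass n σ x y → g x = g y := by
    intro x y hxy
    by_cases h1 : sameFinCycleClass n σ x w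
    · have h1y : sameFinCycleClass n σ y w := R_trans hσ (R_symm hσ hxy) h1
      simp only [hg, if_pos h1, if_pos h1y]
    · have h1y : ¬ sameFinCycleClass n σ y w := fun h => h1 (R_trans hσ hxy h)
      have hx : Avoids σ M x.val := (hB x).resolve_right h1
      have hy : Avoids σ M y.val := avoids_of_R hσ hM hxy hx
      simp only [hg, if_neg h1, if_neg h1y, dif_pos hx, dif_pos hy]
      congr 1
      exact Quot.sound (Rpi_of_Rsigma hagree hx _ _ hxy)
  set f : Quot (sameFinCycleClass n σ) → Option (Quot (sameFinCycleClass n π)) :=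
    Quot.lift g hwd with hf
  have hinj : Function.Injective f := by
    rintro ⟨x⟩ ⟨y⟩ h
    change g x = g y at h
    apply Quot.sound
    by_cases h1x : sameFinCycleClass n σ x w <;>
    by_cases h1y : sameFinCycleClass n σ y w
    · exact R_trans hσ h1x (R_symm hσ h1y)
    · exfalso
      have hy : Avoids σ M y.val := (hB y).resolve_right h1y
      simp only [hg, if_pos h1x, if_neg h1y, dif_pos hy] at h
      cases h
    · exfalso
      have hx : Avoids σ M x.val := (hB x).resolve_right h1x
      simp only [hg, if_pos h1y, if_neg h1x, dif_pos hx] at h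
      cases h
    · have hx : Avoids σ M x.val := (hB x).resolve_right h1x
      have hy : Avoids σ M y.val := (hB y).resolve_right h1y
      simp only [hg, if_neg h1x, if_neg h1y, dif_pos hx, dif_pos hy,
        Option.some.injEq] at h
      exact Rsigma_of_Rpi hagree hx (R_of_quot_eq hπ h)
  haveI : Finite (Option (Quot (sameFinCycleClass n π))) := by
    have := Fintype.ofFinite (Quot (sameFinCycleClass n π)); infer_instance
  calc finCycleClassCount n σ
      ≤ Nat.card (Option (Quot (sameFinCycleClass n π))) :=
        Nat.card_le_card_of_injective f hinj
    _ = finCycleClassCount n π + 1 := card_option_aux _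

lemma count_scenario_A (hn : 2 ≤ n) (hσ : PP n σ) (hπ : PP n π)
    (hagree : ∀ x, x ∉ M → σ x = π x)
    (hA : ∀ x : {x : ℤ // (permOrbit σ x).Finite}, Avoids σ M x.val) :
    finCycleClassCount n σ ≤ finCycleClassCount n π := by
  classical
  haveI hQfin : Finite (Quot (sameFinCycleClass n π)) := quot_finite hn hπ
  have hav_fin : ∀ x : {x : ℤ // (permOrbit σ x).Finite},
      (permOrbit π x.val).Finite := by
    intro x
    rw [orbit_eq_of_avoids hagree (hA x)]
    exact x.prop
  set g : {x : ℤ // (permOrbit σ x).Finite} → Quot (sameFinCycleClass n π) :=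
    fun x => Quot.mk _ ⟨x.val, hav_fin x⟩ with hg
  have hwd : ∀ x y, sameFinCycleClass n σ x y → g x = g y := by
    intro x y hxy
    exact Quot.sound (Rpi_of_Rsigma hagree (hA x) _ _ hxy)
  set f : Quot (sameFinCycleClass n σ) → Quot (sameFinCycleClass n π) :=
    Quot.lift g hwd with hf
  have hinj : Function.Injective f := by
    rintro ⟨x⟩ ⟨y⟩ h
    change g x = g y at h
    exact Quot.sound (Rsigma_of_Rpi hagree (hA x) (R_of_quot_eq hπ h))
  exact Nat.card_le_card_of_injective f hinj

end Count2

end Aux12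

namespace Aux12

section Concrete
variable {n : ℤ}

lemma reflN_apply (n a b : ℤ) (h : ¬ a % n = b % n) (x : ℤ) :
    reflN n a b x =
      x + (if x % n = a % n then b - a else if x % n = b % n then a - b else 0) := by
  unfold reflN
  rw [dif_neg h]
  exact congrFun (Function.Involutive.coe_toPerm _) x

lemma loopP_apply (n a x : ℤ) : loopP n a x = if x % n = a % n then x + n else x := rfl

lemma loopP_inv_apply (n a x : ℤ) :
    (loopP n a)⁻¹ x = if x % n = a % n then x - n else x := rfl

lemma emod_add_mul_n (z m n : ℤ) : (z + m * n) % n = z % n := by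
  rw [show z + m * n = z + n * m by ring, Int.add_mul_emod_self_left]

lemma reflN_PP (hn : 2 ≤ n) (a b : ℤ) (h : ¬ a % n = b % n) : PP n (reflN n a b) := by
  intro x
  rw [reflN_apply n a b h, reflN_apply n a b h, emod_add_n]
  split_ifs <;> ring

lemma loopP_PP (a : ℤ) : PP n (loopP n a) := by
  intro x
  rw [loopP_apply, loopP_apply, emod_add_n]
  split_ifs <;> ring

end Concrete

end Aux12

open Aux12 in
/-- If `π` is a periodic permutation of `ℤ` and `τ` is either a reflection
`(i j)_n` with `i ≢ j (mod n)` or a loop `ℓ_a^{±1}`, then `τπ` has at most one more mod-`n`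
class of finite cycles than `π`. -/
theorem mul_reflection_or_loop_classes_le
    (n : ℤ) (hn : 2 ≤ n) (π τ : Equiv.Perm ℤ)
    (hπ : ∀ i : ℤ, π (i + n) = π i + n)
    (hτ : (∃ a b : ℤ, ¬ a % n = b % n ∧ τ = reflN n a b) ∨
          (∃ a : ℤ, τ = loopP n a ∨ τ = (loopP n a)⁻¹)) :
    finCycleClassCount n (τ * π) ≤ finCycleClassCount n π + 1 := by
  classical
  have hπPP : PP n π := hπ
  set σ := τ * π with hσdef
  have happly : ∀ x, σ x = τ (π x) := fun x => rfl
  rcases hτ with ⟨a, b, hab, rfl⟩ | ⟨a, hl⟩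
  · -- reflection case
    have hτPP : PP n (reflN n a b) := reflN_PP hn a b hab
    have hσPP : PP n σ := hτPP.mul hπPP
    set M : Set ℤ := {x | π x % n = a % n ∨ π x % n = b % n} with hMdef
    have hagree : ∀ x, x ∉ M → σ x = π x := by
      intro x hx
      simp only [hMdef, Set.mem_setOf_eq, not_or] at hx
      rw [happly, reflN_apply n a b hab, if_neg hx.1, if_neg hx.2, add_zero]
    have hM : ∀ x ∈ M, ∀ m : ℤ, x + m * n ∈ M := by
      intro x hx m
      simp only [hMdef, Set.mem_setOf_eq] at hx ⊢
      rw [hπPP.shift, emod_add_mul_n]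
      exact hx
    set u := π.symm a with hu
    set v := π.symm b with hv
    have hπu : π u = a := π.apply_symm_apply a
    have hπv : π v = b := π.apply_symm_apply b
    have hba : ¬ b % n = a % n := fun h => hab h.symm
    have hσu : σ u = b := by
      rw [happly, hπu, reflN_apply n a b hab, if_pos rfl]; ring
    have hσv : σ v = a := by
      rw [happly, hπv, reflN_apply n a b hab, if_neg hba, if_pos rfl]; ring
    have huM : u ∈ M := by
      simp [hMdef, hπu]
    have hMchar : ∀ x ∈ M, ∃ k : ℤ, x = u + k * n ∨ x = v + k * n := by
      intro x hx
      simp only [hMdef, Set.mem_setOf_eq] at hx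
      rcases hx with hx | hx
      · rw [Int.emod_eq_emod_iff_emod_sub_eq_zero] at hx
        obtain ⟨k, hk⟩ := Int.dvd_of_emod_eq_zero hx
        refine ⟨k, Or.inl ?_⟩
        apply π.injective
        rw [hπPP.shift, hπu]
        linear_combination hk
      · rw [Int.emod_eq_emod_iff_emod_sub_eq_zero] at hx
        obtain ⟨k, hk⟩ := Int.dvd_of_emod_eq_zero hx
        refine ⟨k, Or.inr ?_⟩
        apply π.injective
        rw [hπPP.shift, hπv]
        linear_combination hk
    -- any non-avoiding finite orbit is related to u or v
    have hdisj : ∀ x : {x : ℤ // (permOrbit σ x).Finite},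
        Avoids σ M x.val ∨ (∃ j k : ℤ, (σ ^ j) x.val = u + k * n) ∨
          (∃ j k : ℤ, (σ ^ j) x.val = v + k * n) := by
      intro x
      by_cases hx : Avoids σ M x.val
      · exact Or.inl hx
      · right
        simp only [Avoids, not_forall] at hx
        obtain ⟨y, hy1, hy2⟩ := hx
        have hy2' : y ∈ M := not_not.mp hy2
        obtain ⟨j, rfl⟩ := hy1
        obtain ⟨k, hk | hk⟩ := hMchar _ hy2'
        · exact Or.inl ⟨j, k, hk⟩
        · exact Or.inr ⟨j, k, hk⟩
    by_cases hup : (permOrbit σ u).Finite <;> by_cases hvp : (permOrbit σ v).Finite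
    · by_cases hRuv : sameFinCycleClass n σ ⟨u, hup⟩ ⟨v, hvp⟩
      · -- scenario B with w = u
        refine count_scenario_B hn hσPP hπPP hagree hM ⟨u, hup⟩ ?_
        intro x
        rcases hdisj x with hx | ⟨j, k, hj⟩ | ⟨j, k, hj⟩
        · exact Or.inl hx
        · exact Or.inr ⟨j, k, hj⟩
        · exact Or.inr (R_trans hσPP (⟨j, k, hj⟩ :
            sameFinCycleClass n σ x ⟨v, hvp⟩) (R_symm hσPP hRuv))
      · -- scenario C
        have hπfin : (permOrbit π u).Finite :=
          merge_finite hn hσPP hagree hup hvp hRuv hMchar (by rw [hπu, hσv]) (by rw [hπv, hσu])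
        refine count_scenario_C hn hσPP hπPP hagree hM ⟨u, hup⟩ ⟨v, hvp⟩ ?_ hπfin huM
        intro x
        rcases hdisj x with hx | ⟨j, k, hj⟩ | ⟨j, k, hj⟩
        · exact Or.inl hx
        · exact Or.inr (Or.inl ⟨j, k, hj⟩)
        · exact Or.inr (Or.inr ⟨j, k, hj⟩)
    · -- u finite, v infinite : scenario B with w = u
      refine count_scenario_B hn hσPP hπPP hagree hM ⟨u, hup⟩ ?_
      intro x
      rcases hdisj x with hx | ⟨j, k, hj⟩ | ⟨j, k, hj⟩
      · exact Or.inl hx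
      · exact Or.inr ⟨j, k, hj⟩
      · exact absurd (finite_orbit_of_translate_mem hσPP x.prop hj) hvp
    · -- u infinite, v finite : scenario B with w = v
      refine count_scenario_B hn hσPP hπPP hagree hM ⟨v, hvp⟩ ?_
      intro x
      rcases hdisj x with hx | ⟨j, k, hj⟩ | ⟨j, k, hj⟩
      · exact Or.inl hx
      · exact absurd (finite_orbit_of_translate_mem hσPP x.prop hj) hup
      · exact Or.inr ⟨j, k, hj⟩
    · -- both infinite : scenario A
      refine le_trans (count_scenario_A hn hσPP hπPP hagree ?_) (Nat.le_succ _)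
      intro x
      rcases hdisj x with hx | ⟨j, k, hj⟩ | ⟨j, k, hj⟩
      · exact hx
      · exact absurd (finite_orbit_of_translate_mem hσPP x.prop hj) hup
      · exact absurd (finite_orbit_of_translate_mem hσPP x.prop hj) hvp
  · -- loop case
    have hτPP : PP n τ := by
      rcases hl with rfl | rfl
      · exact loopP_PP a
      · exact (loopP_PP a).inv
    have hσPP : PP n σ := hτPP.mul hπPP
    set M : Set ℤ := {x | π x % n = a % n} with hMdef
    have hagree : ∀ x, x ∉ M → σ x = π x := by
      intro x hx
      simp only [hMdef, Set.mem_setOf_eq] at hx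
      rw [happly]
      rcases hl with rfl | rfl
      · rw [loopP_apply, if_neg hx]
      · rw [loopP_inv_apply, if_neg hx]
    have hM : ∀ x ∈ M, ∀ m : ℤ, x + m * n ∈ M := by
      intro x hx m
      simp only [hMdef, Set.mem_setOf_eq] at hx ⊢
      rw [hπPP.shift, emod_add_mul_n]
      exact hx
    set w := π.symm a with hw
    have hπw : π w = a := π.apply_symm_apply a
    have hMchar : ∀ x ∈ M, ∃ k : ℤ, x = w + k * n := by
      intro x hx
      simp only [hMdef, Set.mem_setOf_eq] at hx
      rw [Int.emod_eq_emod_iff_emod_sub_eq_zero] at hx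
      obtain ⟨k, hk⟩ := Int.dvd_of_emod_eq_zero hx
      refine ⟨k, ?_⟩
      apply π.injective
      rw [hπPP.shift, hπw]
      linear_combination hk
    have hdisj : ∀ x : {x : ℤ // (permOrbit σ x).Finite},
        Avoids σ M x.val ∨ (∃ j k : ℤ, (σ ^ j) x.val = w + k * n) := by
      intro x
      by_cases hx : Avoids σ M x.val
      · exact Or.inl hx
      · right
        simp only [Avoids, not_forall] at hx
        obtain ⟨y, hy1, hy2⟩ := hx
        have hy2' : y ∈ M := not_not.mp hy2
        obtain ⟨j, rfl⟩ := hy1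
        obtain ⟨k, hk⟩ := hMchar _ hy2'
        exact ⟨j, k, hk⟩
    by_cases hwp : (permOrbit σ w).Finite
    · refine count_scenario_B hn hσPP hπPP hagree hM ⟨w, hwp⟩ ?_
      intro x
      rcases hdisj x with hx | ⟨j, k, hj⟩
      · exact Or.inl hx
      · exact Or.inr ⟨j, k, hj⟩
    · refine le_trans (count_scenario_A hn hσPP hπPP hagree ?_) (Nat.le_succ _)
      intro x
      rcases hdisj x with hx | ⟨j, k, hj⟩
      · exact hx
      · exact absurd (finite_orbit_of_translate_mem hσPP x.prop hj) hwp
end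

section
/- Let π be a periodic permutation of ℤ and τ = (a b)_n a reflection with a and b in the same finite cycle of π, say the cycle class (a₁ a₂ ⋯ a_k)_n with a = a₁ and b = a_i for some 1 < i ≤ k. Then τπ has cycle classes (a₁ ⋯ a_{i-1})_n and (a_i ⋯ a_k)_n in place of (a₁ ⋯ a_k)_n, so τπ has exactly one more mod-n class of finite cycles than π. -/
/- ## Auxiliary lemmas -/

theorem Equiv.Perm.apply_inv_self {α : Type*} (f : Equiv.Perm α) (x : α) : f (f⁻¹ x) = x :=
  f.apply_symm_apply x

theorem Equiv.Perm.inv_apply_self {α : Type*} (f : Equiv.Perm α) (x : α) : f⁻¹ (f x) = x :=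
  f.symm_apply_apply x

lemma per_inv (σ : Equiv.Perm ℤ) (n : ℤ) (hσ : ∀ x, σ (x + n) = σ x + n) :
    ∀ x, σ⁻¹ (x + n) = σ⁻¹ x + n := by
  intro x
  have := hσ (σ⁻¹ x)
  rw [Equiv.Perm.apply_inv_self] at this
  rw [← this, Equiv.Perm.inv_apply_self]

lemma per_zpow (σ : Equiv.Perm ℤ) (n : ℤ) (hσ : ∀ x, σ (x + n) = σ x + n) (j : ℤ) :
    ∀ x, (σ ^ j) (x + n) = (σ ^ j) x + n := by
  induction j using Int.induction_on with
  | zero => simp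
  | succ j ih =>
      intro x
      rw [show (j : ℤ) + 1 = 1 + j by ring, zpow_add, zpow_one]
      simp only [Equiv.Perm.mul_apply, ih x, hσ]
  | pred j ih =>
      intro x
      rw [show (-(j:ℤ) - 1) = (-1) + (-j) by ring, zpow_add]
      simp only [Equiv.Perm.mul_apply, ih x, zpow_neg_one, per_inv σ n hσ]

lemma per_mul (σ : Equiv.Perm ℤ) (n : ℤ) (hσ : ∀ x, σ (x + n) = σ x + n) (m : ℤ) :
    ∀ x, σ (x + m * n) = σ x + m * n := by
  induction m using Int.induction_on with
  | zero => simp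
  | succ m ih =>
      intro x
      have : x + (m + 1) * n = (x + m * n) + n := by ring
      rw [this, hσ, ih]; ring
  | pred m ih =>
      intro x
      have h1 : (x + (-m - 1) * n) + n = x + (-m) * n := by ring
      have := hσ (x + (-m - 1) * n)
      rw [h1, ih] at this
      omega

lemma per_zpow_mul (σ : Equiv.Perm ℤ) (n : ℤ) (hσ : ∀ x, σ (x + n) = σ x + n) (j m : ℤ)
    (x : ℤ) : (σ ^ j) (x + m * n) = (σ ^ j) x + m * n :=
  per_mul (σ ^ j) n (per_zpow σ n hσ j) m x

lemma zpow_fix (σ : Equiv.Perm ℤ) (x : ℤ) (h : σ x = x) (q : ℤ) : (σ ^ q) x = x := by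
  induction q using Int.induction_on with
  | zero => simp
  | succ q ih => rw [show (q:ℤ)+1 = 1+q by ring, zpow_add, zpow_one, Equiv.Perm.mul_apply, ih, h]
  | pred q ih =>
      rw [show (-(q:ℤ)-1) = (-1)+(-q) by ring, zpow_add, Equiv.Perm.mul_apply, ih, zpow_neg_one]
      conv_lhs => rw [← h]
      rw [Equiv.Perm.inv_apply_self]

lemma orbit_finite_of_pow_fix (σ : Equiv.Perm ℤ) (x : ℤ) (p : ℕ) (hp : 0 < p)
    (hfix : (σ ^ p) x = x) : (permOrbit σ x).Finite := by
  apply Set.Finite.subset ((Set.finite_Iio p).image (fun r : ℕ => (σ ^ r) x))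
  rintro y ⟨j, rfl⟩
  have hp' : (0:ℤ) < (p:ℤ) := by exact_mod_cast hp
  refine ⟨(j % p).toNat, ?_, ?_⟩
  · simp only [Set.mem_Iio]
    have h1 : j % (p:ℤ) < p := Int.emod_lt_of_pos j hp'
    omega
  · have h0 : 0 ≤ j % (p:ℤ) := Int.emod_nonneg j (by omega)
    have hj : j = j % (p:ℤ) + (p:ℤ) * (j / p) := by
      rw [add_comm]; exact (Int.mul_ediv_add_emod j p).symm
    have hfixz : ((σ ^ (p:ℤ)) : Equiv.Perm ℤ) x = x := by
      rw [zpow_natCast]; exact hfix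
    calc (fun r : ℕ => (σ ^ r) x) (j % (p:ℤ)).toNat
        = (σ ^ ((j % (p:ℤ)).toNat : ℤ)) x := by rw [zpow_natCast]
      _ = (σ ^ (j % (p:ℤ))) x := by rw [Int.toNat_of_nonneg h0]
      _ = (σ ^ (j % (p:ℤ))) ((σ ^ ((p:ℤ) * (j / p))) x) := by
            rw [zpow_mul, zpow_fix _ _ hfixz]
      _ = (σ ^ j) x := by rw [← Equiv.Perm.mul_apply, ← zpow_add, ← hj]

lemma orbit_shift (σ : Equiv.Perm ℤ) (n : ℤ) (hσ : ∀ x, σ (x + n) = σ x + n) (x m : ℤ)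
    (h : (permOrbit σ x).Finite) : (permOrbit σ (x + m * n)).Finite := by
  have he : permOrbit σ (x + m * n) = (fun y => y + m * n) '' permOrbit σ x := by
    ext y
    constructor
    · rintro ⟨j, rfl⟩
      exact ⟨(σ ^ j) x, ⟨j, rfl⟩, (per_zpow_mul σ n hσ j m x).symm⟩
    · rintro ⟨z, ⟨j, rfl⟩, rfl⟩
      exact ⟨j, per_zpow_mul σ n hσ j m x⟩
  rw [he]
  exact h.image _

lemma same_symm (n : ℤ) (σ : Equiv.Perm ℤ) (hσ : ∀ x, σ (x + n) = σ x + n)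
    {x y} (h : sameFinCycleClass n σ x y) : sameFinCycleClass n σ y x := by
  obtain ⟨j, m, hj⟩ := h
  refine ⟨-j, -m, ?_⟩
  have h1 : (σ ^ (-j)) ((σ ^ j) x.1) = x.1 := by
    rw [← Equiv.Perm.mul_apply, ← zpow_add]; simp
  rw [hj, per_zpow_mul σ n hσ (-j) m y.1] at h1
  have h2 : (σ ^ (-j)) y.1 = x.1 - m * n := by omega
  rw [h2]; ring

lemma finClassFinite (n : ℤ) (hn : 0 < n) (σ : Equiv.Perm ℤ) (hσ : ∀ x, σ (x + n) = σ x + n) :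
    Finite (Quot (sameFinCycleClass n σ)) := by
  let D := {x : ℤ // (0 ≤ x ∧ x < n) ∧ (permOrbit σ x).Finite}
  have hD : Finite D := by
    have : Finite (Set.Ico (0:ℤ) n) := (Set.finite_Ico 0 n).to_subtype
    refine Finite.of_injective (fun d : D => (⟨d.1, d.2.1.1, d.2.1.2⟩ : Set.Ico (0:ℤ) n)) ?_
    intro d e h
    have : (d.1 : ℤ) = e.1 := congrArg (fun z : ↥(Set.Ico (0:ℤ) n) => (z : ℤ)) h
    exact Subtype.ext this
  refine Finite.of_surjective (fun d : D => Quot.mk _ ⟨d.1, d.2.2⟩) ?_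
  intro q
  induction q using Quot.ind with
  | _ y =>
    obtain ⟨y, hy⟩ := y
    have h0 : 0 ≤ y % n := Int.emod_nonneg y (by omega)
    have h1 : y % n < n := Int.emod_lt_of_pos y hn
    have hrep : y % n = y + (-(y / n)) * n := by
      have h := Int.emod_add_mul_ediv y n
      have : (-(y / n)) * n = -(n * (y/n)) := by ring
      omega
    have hfin : (permOrbit σ (y % n)).Finite := by
      rw [hrep]; exact orbit_shift σ n hσ y _ hy
    refine ⟨⟨y % n, ⟨h0, h1⟩, hfin⟩, ?_⟩
    apply Quot.sound
    exact ⟨0, -(y / n), by simpa using hrep⟩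

lemma succ_mod_formula (q m : ℕ) (hm : 0 < m) :
    (q + 1) % m = if q % m + 1 = m then 0 else q % m + 1 := by
  rcases Nat.eq_or_lt_of_le hm with h1 | h2
  · rw [← h1]; simp [Nat.mod_one]
  · have e1 : (q+1) % m = (q % m + 1) % m := by
      conv_lhs => rw [Nat.add_mod, Nat.mod_eq_of_lt h2]
    by_cases h : q % m + 1 = m
    · rw [if_pos h, e1, h, Nat.mod_self]
    · have hlt : q % m + 1 < m := by
        have := Nat.mod_lt q hm
        omega
      rw [if_neg h, e1, Nat.mod_eq_of_lt hlt]

lemma quot_split_count {α β : Type} (r : α → α → Prop) (s : β → β → Prop)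
    (F0 : α → Quot s ⊕ Unit) (hF : ∀ x y, r x y → F0 x = F0 y)
    (G0 : β → Quot r) (hG : ∀ x y, s x y → G0 x = G0 y) (z : α)
    (h1 : ∀ x : α, Sum.elim (Quot.lift G0 hG) (fun _ : Unit => Quot.mk r z) (F0 x) = Quot.mk r x)
    (h2 : ∀ y : β, ∃ w : α, G0 y = Quot.mk r w ∧ F0 w = Sum.inl (Quot.mk s y))
    (h3 : F0 z = Sum.inr Unit.unit)
    [Finite (Quot s)] :
    Nat.card (Quot r) = Nat.card (Quot s) + 1 := by
  have e : Quot r ≃ Quot s ⊕ Unit :=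
    { toFun := Quot.lift F0 hF
      invFun := Sum.elim (Quot.lift G0 hG) (fun _ => Quot.mk r z)
      left_inv := by
        intro q
        induction q using Quot.ind with
        | _ x => exact h1 x
      right_inv := by
        intro w
        rcases w with q | u
        · induction q using Quot.ind with
          | _ y =>
            obtain ⟨w, hw1, hw2⟩ := h2 y
            show Quot.lift F0 hF (Sum.elim (Quot.lift G0 hG) _ (Sum.inl (Quot.mk s y))) = _
            simp only [Sum.elim_inl]
            rw [hw1]
            exact hw2
        · rcases u with ⟨⟩
          exact h3 }
  rw [Nat.card_congr e, Nat.card_sum]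
  simp

/-- Let `π` be a periodic permutation of `ℤ` containing the mod-`n` class
of finite cycles `(a₁ a₂ ⋯ a_k)_n`, and let `τ = (a₁ aᵢ)_n` with `1 < i ≤ k`.  Then `τπ`
has the cycle classes `(a₁ ⋯ a_{i-1})_n` and `(aᵢ ⋯ a_k)_n` in place of `(a₁ ⋯ a_k)_n`
(and agrees with `π` away from the classes of the `aₜ`), so `τπ` has exactly one more
mod-`n` class of finite cycles than `π`. -/
theorem split_finite_cycle_class
    (n : ℤ) (hn : 2 ≤ n) (π : Equiv.Perm ℤ)
    (hπ : ∀ x : ℤ, π (x + n) = π x + n)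
    (k i : ℕ) (a : ℕ → ℤ) (hk : 1 ≤ k) (hi1 : 1 < i) (hik : i ≤ k)
    (hdist : ∀ s t : ℕ, 1 ≤ s → s ≤ k → 1 ≤ t → t ≤ k → s ≠ t → ¬ a s % n = a t % n)
    (hcyc : ∀ t : ℕ, 1 ≤ t → t < k → ∀ ℓ : ℤ, π (a t + ℓ * n) = a (t + 1) + ℓ * n)
    (hclose : ∀ ℓ : ℤ, π (a k + ℓ * n) = a 1 + ℓ * n)
    (τ : Equiv.Perm ℤ) (hτ : τ = reflN n (a 1) (a i)) :
    (∀ t : ℕ, 1 ≤ t → t + 1 < i → ∀ ℓ : ℤ, (τ * π) (a t + ℓ * n) = a (t + 1) + ℓ * n) ∧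
    (∀ ℓ : ℤ, (τ * π) (a (i - 1) + ℓ * n) = a 1 + ℓ * n) ∧
    (∀ t : ℕ, i ≤ t → t < k → ∀ ℓ : ℤ, (τ * π) (a t + ℓ * n) = a (t + 1) + ℓ * n) ∧
    (∀ ℓ : ℤ, (τ * π) (a k + ℓ * n) = a i + ℓ * n) ∧
    (∀ x : ℤ, (∀ t : ℕ, 1 ≤ t → t ≤ k → ¬ x % n = a t % n) → (τ * π) x = π x) ∧
    finCycleClassCount n (τ * π) = finCycleClassCount n π + 1 := by
  classical
  have hn0 : (0:ℤ) < n := by omega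
  have hi0 : 1 ≤ i := le_of_lt hi1
  have hne : ¬ a 1 % n = a i % n := hdist 1 i le_rfl hk hi0 hik (by omega)
  have hτfun : ∀ y : ℤ, τ y = y + (if y % n = a 1 % n then a i - a 1
      else if y % n = a i % n then a 1 - a i else 0) := by
    intro y; rw [hτ]; unfold reflN; rw [dif_neg hne]; rfl
  have hmod : ∀ (c ℓ : ℤ), (c + ℓ * n) % n = c % n := fun c ℓ => Int.add_mul_emod_self_right _ _ _
  have hrep : ∀ x c : ℤ, x % n = c % n → ∃ ℓ : ℤ, x = c + ℓ * n := by
    intro x c h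
    have hdvd : n ∣ x - c := Int.ModEq.dvd (h.symm : Int.ModEq n c x)
    obtain ⟨d, hd⟩ := hdvd
    rw [mul_comm] at hd
    exact ⟨d, by omega⟩
  have hτfix : ∀ y : ℤ, ¬ y % n = a 1 % n → ¬ y % n = a i % n → τ y = y := by
    intro y h1 h2; rw [hτfun, if_neg h1, if_neg h2, add_zero]
  have hτ1 : ∀ ℓ : ℤ, τ (a 1 + ℓ * n) = a i + ℓ * n := by
    intro ℓ; rw [hτfun, hmod, if_pos rfl]; ring
  have hτi : ∀ ℓ : ℤ, τ (a i + ℓ * n) = a 1 + ℓ * n := by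
    intro ℓ
    rw [hτfun, hmod, if_neg (fun hc => hne hc.symm), if_pos rfl]; ring
  -- conjuncts 1-4
  have c1 : ∀ t : ℕ, 1 ≤ t → t + 1 < i → ∀ ℓ : ℤ, (τ * π) (a t + ℓ * n) = a (t+1) + ℓ * n := by
    intro t ht hti ℓ
    rw [Equiv.Perm.mul_apply, hcyc t ht (by omega) ℓ]
    apply hτfix
    · rw [hmod]; exact hdist (t+1) 1 (by omega) (by omega) le_rfl hk (by omega)
    · rw [hmod]; exact hdist (t+1) i (by omega) (by omega) hi0 hik (by omega)
  have c2 : ∀ ℓ : ℤ, (τ * π) (a (i - 1) + ℓ * n) = a 1 + ℓ * n := by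
    intro ℓ
    have h := hcyc (i-1) (by omega) (by omega) ℓ
    rw [show i - 1 + 1 = i by omega] at h
    rw [Equiv.Perm.mul_apply, h, hτi]
  have c3 : ∀ t : ℕ, i ≤ t → t < k → ∀ ℓ : ℤ, (τ * π) (a t + ℓ * n) = a (t+1) + ℓ * n := by
    intro t ht htk ℓ
    rw [Equiv.Perm.mul_apply, hcyc t (by omega) htk ℓ]
    apply hτfix
    · rw [hmod]; exact hdist (t+1) 1 (by omega) (by omega) le_rfl hk (by omega)
    · rw [hmod]; exact hdist (t+1) i (by omega) (by omega) hi0 hik (by omega)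
  have c4 : ∀ ℓ : ℤ, (τ * π) (a k + ℓ * n) = a i + ℓ * n := by
    intro ℓ
    rw [Equiv.Perm.mul_apply, hclose ℓ, hτ1]
  have hAfwd : ∀ x : ℤ, (∃ t, 1 ≤ t ∧ t ≤ k ∧ x % n = a t % n) →
      (∃ t, 1 ≤ t ∧ t ≤ k ∧ (π x) % n = a t % n) := by
    rintro x ⟨t, ht1, htk, hx⟩
    obtain ⟨ℓ, rfl⟩ := hrep x (a t) hx
    by_cases htt : t = k
    · subst htt; exact ⟨1, le_rfl, hk, by rw [hclose, hmod]⟩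
    · exact ⟨t+1, by omega, by omega, by rw [hcyc t ht1 (by omega), hmod]⟩
  have hAinv : ∀ x : ℤ, (∃ t, 1 ≤ t ∧ t ≤ k ∧ (π x) % n = a t % n) →
      (∃ t, 1 ≤ t ∧ t ≤ k ∧ x % n = a t % n) := by
    rintro x ⟨t, ht1, htk, hx⟩
    obtain ⟨ℓ, hℓ⟩ := hrep (π x) (a t) hx
    by_cases htt : t = 1
    · subst htt
      have h2 := hclose ℓ
      have hxx : x = a k + ℓ * n := π.injective (hℓ.trans h2.symm)
      exact ⟨k, hk, le_rfl, by rw [hxx, hmod]⟩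
    · have h2 := hcyc (t-1) (by omega) (by omega) ℓ
      rw [show t - 1 + 1 = t by omega] at h2
      have hxx : x = a (t-1) + ℓ * n := π.injective (hℓ.trans h2.symm)
      exact ⟨t-1, by omega, by omega, by rw [hxx, hmod]⟩
  have c5 : ∀ x : ℤ, (∀ t : ℕ, 1 ≤ t → t ≤ k → ¬ x % n = a t % n) → (τ * π) x = π x := by
    intro x hx
    have hnA : ¬ ∃ t, 1 ≤ t ∧ t ≤ k ∧ (π x) % n = a t % n := by
      intro hc
      obtain ⟨t, ht1, htk, hx'⟩ := hAinv x hc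
      exact hx t ht1 htk hx'
    push_neg at hnA
    rw [Equiv.Perm.mul_apply]
    exact hτfix (π x) (hnA 1 le_rfl hk) (hnA i hi0 hik)
  have hτper : ∀ x : ℤ, τ (x + n) = τ x + n := by
    intro x
    rw [hτfun, hτfun x]
    have hxn : (x + n) % n = x % n := by
      have := hmod x 1
      simpa using this
    rw [hxn]; ring
  have hσper : ∀ x : ℤ, (τ * π) (x + n) = (τ * π) x + n := by
    intro x; rw [Equiv.Perm.mul_apply, Equiv.Perm.mul_apply, hπ, hτper]
  have hLfwd : ∀ x : ℤ, (∃ t, 1 ≤ t ∧ t < i ∧ x % n = a t % n) →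
      (∃ t, 1 ≤ t ∧ t < i ∧ ((τ*π) x) % n = a t % n) := by
    rintro x ⟨t, ht1, hti, hx⟩
    obtain ⟨ℓ, rfl⟩ := hrep x (a t) hx
    by_cases htt : t = i - 1
    · subst htt; exact ⟨1, le_rfl, hi1, by rw [c2, hmod]⟩
    · exact ⟨t+1, by omega, by omega, by rw [c1 t ht1 (by omega), hmod]⟩
  have hUfwd : ∀ x : ℤ, (∃ t, i ≤ t ∧ t ≤ k ∧ x % n = a t % n) →
      (∃ t, i ≤ t ∧ t ≤ k ∧ ((τ*π) x) % n = a t % n) := by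
    rintro x ⟨t, ht1, htk, hx⟩
    obtain ⟨ℓ, rfl⟩ := hrep x (a t) hx
    by_cases htt : t = k
    · subst htt; exact ⟨i, le_rfl, hik, by rw [c4, hmod]⟩
    · exact ⟨t+1, by omega, by omega, by rw [c3 t ht1 (by omega), hmod]⟩
  have hBfwdπ : ∀ x : ℤ, (∀ t, 1 ≤ t → t ≤ k → ¬ x % n = a t % n) →
      (∀ t, 1 ≤ t → t ≤ k → ¬ (π x) % n = a t % n) := by
    intro x hx t ht1 htk hc
    obtain ⟨s, hs1, hsk, hx'⟩ := hAinv x ⟨t, ht1, htk, hc⟩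
    exact hx s hs1 hsk hx'
  have hBfwd : ∀ x : ℤ, (∀ t, 1 ≤ t → t ≤ k → ¬ x % n = a t % n) →
      (∀ t, 1 ≤ t → t ≤ k → ¬ ((τ*π) x) % n = a t % n) := by
    intro x hx
    rw [c5 x hx]
    exact hBfwdπ x hx
  have hLU : ∀ x : ℤ, (∃ t, 1 ≤ t ∧ t < i ∧ x % n = a t % n) →
      (∃ t, i ≤ t ∧ t ≤ k ∧ x % n = a t % n) → False := by
    rintro x ⟨s, hs1, hsi, hxs⟩ ⟨t, hti, htk, hxt⟩
    exact hdist s t hs1 (by omega) (by omega) htk (by omega) (hxs.symm.trans hxt)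
  have htri : ∀ x : ℤ, (∃ t, 1 ≤ t ∧ t < i ∧ x % n = a t % n) ∨
      (∃ t, i ≤ t ∧ t ≤ k ∧ x % n = a t % n) ∨
      (∀ t, 1 ≤ t → t ≤ k → ¬ x % n = a t % n) := by
    intro x
    by_cases h : ∃ t, 1 ≤ t ∧ t ≤ k ∧ x % n = a t % n
    · obtain ⟨t, ht1, htk, hx⟩ := h
      by_cases hti : t < i
      · exact Or.inl ⟨t, ht1, hti, hx⟩
      · exact Or.inr (Or.inl ⟨t, by omega, htk, hx⟩)
    · push_neg at h
      exact Or.inr (Or.inr h)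
  have hLbwd : ∀ x : ℤ, (∃ t, 1 ≤ t ∧ t < i ∧ ((τ*π) x) % n = a t % n) →
      (∃ t, 1 ≤ t ∧ t < i ∧ x % n = a t % n) := by
    intro x hLx
    rcases htri x with h | h | h
    · exact h
    · exact absurd (hUfwd x h) (fun hc => hLU _ hLx hc)
    · obtain ⟨t, ht1, hti, hx⟩ := hLx
      exact absurd hx (hBfwd x h t ht1 (by omega))
  have hUbwd : ∀ x : ℤ, (∃ t, i ≤ t ∧ t ≤ k ∧ ((τ*π) x) % n = a t % n) →
      (∃ t, i ≤ t ∧ t ≤ k ∧ x % n = a t % n) := by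
    intro x hUx
    rcases htri x with h | h | h
    · exact absurd hUx (fun hc => hLU _ (hLfwd x h) hc)
    · exact h
    · obtain ⟨t, hti, htk, hx⟩ := hUx
      exact absurd hx (hBfwd x h t (by omega) htk)
  have hBbwd : ∀ x : ℤ, (∀ t, 1 ≤ t → t ≤ k → ¬ ((τ*π) x) % n = a t % n) →
      (∀ t, 1 ≤ t → t ≤ k → ¬ x % n = a t % n) := by
    intro x hBx
    rcases htri x with h | h | h
    · obtain ⟨t, ht1, hti, hx⟩ := hLfwd x h
      exact absurd hx (hBx t ht1 (by omega))
    · obtain ⟨t, hti, htk, hx⟩ := hUfwd x h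
      exact absurd hx (hBx t (by omega) htk)
    · exact h
  have hLinv : ∀ x : ℤ, (∃ t, 1 ≤ t ∧ t < i ∧ x % n = a t % n) →
      (∃ t, 1 ≤ t ∧ t < i ∧ ((τ*π)⁻¹ x) % n = a t % n) := by
    intro x h
    exact hLbwd _ (by rwa [Equiv.Perm.apply_inv_self])
  have hUinv : ∀ x : ℤ, (∃ t, i ≤ t ∧ t ≤ k ∧ x % n = a t % n) →
      (∃ t, i ≤ t ∧ t ≤ k ∧ ((τ*π)⁻¹ x) % n = a t % n) := by
    intro x h
    exact hUbwd _ (by rwa [Equiv.Perm.apply_inv_self])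
  have hBπinv : ∀ x : ℤ, (∀ t, 1 ≤ t → t ≤ k → ¬ x % n = a t % n) →
      (∀ t, 1 ≤ t → t ≤ k → ¬ (π⁻¹ x) % n = a t % n) := by
    intro x hx t ht1 htk hc
    obtain ⟨s, hs1, hsk, hs⟩ := hAfwd (π⁻¹ x) ⟨t, ht1, htk, hc⟩
    rw [Equiv.Perm.apply_inv_self] at hs
    exact hx s hs1 hsk hs
  have hσinvB : ∀ x : ℤ, (∀ t, 1 ≤ t → t ≤ k → ¬ x % n = a t % n) →
      (τ*π)⁻¹ x = π⁻¹ x := by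
    intro x hx
    apply (τ*π).injective
    rw [Equiv.Perm.apply_inv_self, c5 _ (hBπinv x hx), Equiv.Perm.apply_inv_self]
  -- zpow invariance
  have hLz : ∀ j : ℤ, ∀ x : ℤ, (∃ t, 1 ≤ t ∧ t < i ∧ x % n = a t % n) →
      (∃ t, 1 ≤ t ∧ t < i ∧ (((τ*π) ^ j) x) % n = a t % n) := by
    intro j
    induction j using Int.induction_on with
    | zero => intro x h; simpa using h
    | succ j ih =>
        intro x h
        rw [show (j:ℤ)+1 = 1+j by ring, zpow_add, zpow_one, Equiv.Perm.mul_apply]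
        exact hLfwd _ (ih x h)
    | pred j ih =>
        intro x h
        rw [show (-(j:ℤ)-1) = (-1)+(-j) by ring, zpow_add, Equiv.Perm.mul_apply, zpow_neg_one]
        exact hLinv _ (ih x h)
  have hUz : ∀ j : ℤ, ∀ x : ℤ, (∃ t, i ≤ t ∧ t ≤ k ∧ x % n = a t % n) →
      (∃ t, i ≤ t ∧ t ≤ k ∧ (((τ*π) ^ j) x) % n = a t % n) := by
    intro j
    induction j using Int.induction_on with
    | zero => intro x h; simpa using h
    | succ j ih =>
        intro x h
        rw [show (j:ℤ)+1 = 1+j by ring, zpow_add, zpow_one, Equiv.Perm.mul_apply]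
        exact hUfwd _ (ih x h)
    | pred j ih =>
        intro x h
        rw [show (-(j:ℤ)-1) = (-1)+(-j) by ring, zpow_add, Equiv.Perm.mul_apply, zpow_neg_one]
        exact hUinv _ (ih x h)
  have hBz : ∀ j : ℤ, ∀ x : ℤ, (∀ t, 1 ≤ t → t ≤ k → ¬ x % n = a t % n) →
      (((τ*π) ^ j) x = (π ^ j) x ∧
        (∀ t, 1 ≤ t → t ≤ k → ¬ ((π ^ j) x) % n = a t % n)) := by
    intro j
    induction j using Int.induction_on with
    | zero => intro x h; exact ⟨by simp, by simpa using h⟩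
    | succ j ih =>
        intro x h
        obtain ⟨he, hb⟩ := ih x h
        rw [show (j:ℤ)+1 = 1+j by ring, zpow_add, zpow_add, zpow_one, zpow_one,
          Equiv.Perm.mul_apply, Equiv.Perm.mul_apply, he]
        exact ⟨c5 _ hb, hBfwdπ _ hb⟩
    | pred j ih =>
        intro x h
        obtain ⟨he, hb⟩ := ih x h
        rw [show (-(j:ℤ)-1) = (-1)+(-j) by ring, zpow_add, zpow_add,
          Equiv.Perm.mul_apply, Equiv.Perm.mul_apply, zpow_neg_one, zpow_neg_one, he]
        exact ⟨hσinvB _ hb, hBπinv _ hb⟩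
  -- nat-power cycle formulas
  have hπq : ∀ (q : ℕ) (ℓ : ℤ), (π ^ q) (a 1 + ℓ * n) = a (q % k + 1) + ℓ * n := by
    intro q ℓ
    induction q with
    | zero => simp [Nat.zero_mod]
    | succ q ih =>
        rw [pow_succ', Equiv.Perm.mul_apply, ih]
        by_cases hq : q % k + 1 = k
        · rw [hq, hclose]
          have hmf : (q+1) % k = 0 := by rw [succ_mod_formula q k (by omega), if_pos hq]
          congr 2
          omega
        · have h1 : q % k < k := Nat.mod_lt q (by omega)
          rw [hcyc (q % k + 1) (by omega) (by omega)]
          have hmf : (q+1) % k = q % k + 1 := by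
            rw [succ_mod_formula q k (by omega), if_neg hq]
          congr 2
          omega
  have hσLq : ∀ (q : ℕ) (ℓ : ℤ), ((τ*π) ^ q) (a 1 + ℓ * n) = a (q % (i-1) + 1) + ℓ * n := by
    intro q ℓ
    induction q with
    | zero => simp [Nat.zero_mod]
    | succ q ih =>
        rw [pow_succ', Equiv.Perm.mul_apply, ih]
        by_cases hq : q % (i-1) + 1 = i - 1
        · rw [hq, c2]
          have hmf : (q+1) % (i-1) = 0 := by
            rw [succ_mod_formula q (i-1) (by omega), if_pos hq]
          congr 2
          omega
        · have h1 : q % (i-1) < i - 1 := Nat.mod_lt q (by omega)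
          rw [c1 (q % (i-1) + 1) (by omega) (by omega)]
          have hmf : (q+1) % (i-1) = q % (i-1) + 1 := by
            rw [succ_mod_formula q (i-1) (by omega), if_neg hq]
          congr 2
          omega
  have hσUq : ∀ (q : ℕ) (ℓ : ℤ), ((τ*π) ^ q) (a i + ℓ * n) = a (q % (k-i+1) + i) + ℓ * n := by
    intro q ℓ
    induction q with
    | zero => simp [Nat.zero_mod]
    | succ q ih =>
        rw [pow_succ', Equiv.Perm.mul_apply, ih]
        by_cases hq : q % (k-i+1) + i = k
        · rw [hq, c4]
          have hmf : (q+1) % (k-i+1) = 0 := by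
            rw [succ_mod_formula q (k-i+1) (by omega), if_pos (by omega)]
          congr 2
          omega
        · have h1 : q % (k-i+1) < k - i + 1 := Nat.mod_lt q (by omega)
          rw [c3 (q % (k-i+1) + i) (by omega) (by omega)]
          have hmf : (q+1) % (k-i+1) = q % (k-i+1) + 1 := by
            rw [succ_mod_formula q (k-i+1) (by omega), if_neg (by omega)]
          congr 2
          omega
  -- fixed points
  have hπAfix : ∀ t : ℕ, 1 ≤ t → t ≤ k → ∀ ℓ : ℤ, (π ^ k) (a t + ℓ * n) = a t + ℓ * n := by
    intro t ht1 htk ℓ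
    have h1 : a t + ℓ * n = (π ^ (t-1)) (a 1 + ℓ * n) := by
      rw [hπq, Nat.mod_eq_of_lt (by omega)]
      congr 2
      omega
    rw [h1, ← Equiv.Perm.mul_apply, ← pow_add, hπq, hπq, Nat.add_mod_left]
  have hσLfix : ∀ t : ℕ, 1 ≤ t → t < i → ∀ ℓ : ℤ,
      ((τ*π) ^ (i-1)) (a t + ℓ * n) = a t + ℓ * n := by
    intro t ht1 hti ℓ
    have h1 : a t + ℓ * n = ((τ*π) ^ (t-1)) (a 1 + ℓ * n) := by
      rw [hσLq, Nat.mod_eq_of_lt (by omega)]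
      congr 2
      omega
    rw [h1, ← Equiv.Perm.mul_apply, ← pow_add, hσLq, hσLq, Nat.add_mod_left]
  have hσUfix : ∀ t : ℕ, i ≤ t → t ≤ k → ∀ ℓ : ℤ,
      ((τ*π) ^ (k-i+1)) (a t + ℓ * n) = a t + ℓ * n := by
    intro t hti htk ℓ
    have h1 : a t + ℓ * n = ((τ*π) ^ (t-i)) (a i + ℓ * n) := by
      rw [hσUq, Nat.mod_eq_of_lt (by omega)]
      congr 2
      omega
    rw [h1, ← Equiv.Perm.mul_apply, ← pow_add, hσUq, hσUq, Nat.add_mod_left]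
  -- finiteness of orbits
  have finπA : ∀ t : ℕ, 1 ≤ t → t ≤ k → ∀ ℓ : ℤ, (permOrbit π (a t + ℓ * n)).Finite :=
    fun t ht1 htk ℓ => orbit_finite_of_pow_fix π _ k (by omega) (hπAfix t ht1 htk ℓ)
  have finσL : ∀ t : ℕ, 1 ≤ t → t < i → ∀ ℓ : ℤ, (permOrbit (τ*π) (a t + ℓ * n)).Finite :=
    fun t ht1 hti ℓ => orbit_finite_of_pow_fix (τ*π) _ (i-1) (by omega) (hσLfix t ht1 hti ℓ)
  have finσU : ∀ t : ℕ, i ≤ t → t ≤ k → ∀ ℓ : ℤ, (permOrbit (τ*π) (a t + ℓ * n)).Finite :=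
    fun t hti htk ℓ => orbit_finite_of_pow_fix (τ*π) _ (k-i+1) (by omega) (hσUfix t hti htk ℓ)
  have hOrbEq : ∀ x : ℤ, (∀ t, 1 ≤ t → t ≤ k → ¬ x % n = a t % n) →
      permOrbit (τ*π) x = permOrbit π x := by
    intro x hx
    ext y
    constructor
    · rintro ⟨j, rfl⟩
      exact ⟨j, ((hBz j x hx).1).symm⟩
    · rintro ⟨j, rfl⟩
      exact ⟨j, (hBz j x hx).1⟩
  -- reach lemmas
  have hπreach : ∀ s t : ℕ, 1 ≤ s → s ≤ k → 1 ≤ t → t ≤ k → ∀ ℓ : ℤ,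
      ∃ p : ℕ, (π ^ p) (a s + ℓ * n) = a t + ℓ * n := by
    intro s t hs1 hsk ht1 htk ℓ
    have hs : a s + ℓ * n = (π ^ (s-1)) (a 1 + ℓ * n) := by
      rw [hπq, Nat.mod_eq_of_lt (by omega)]
      congr 2
      omega
    refine ⟨k + t - s, ?_⟩
    rw [hs, ← Equiv.Perm.mul_apply, ← pow_add, hπq]
    have he : k + t - s + (s - 1) = (t - 1) + k := by omega
    rw [he, Nat.add_mod_right, Nat.mod_eq_of_lt (by omega)]
    congr 2
    omega
  have hσLreach : ∀ s t : ℕ, 1 ≤ s → s < i → 1 ≤ t → t < i → ∀ ℓ : ℤ,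
      ∃ p : ℕ, ((τ*π) ^ p) (a s + ℓ * n) = a t + ℓ * n := by
    intro s t hs1 hsi ht1 hti ℓ
    have hs : a s + ℓ * n = ((τ*π) ^ (s-1)) (a 1 + ℓ * n) := by
      rw [hσLq, Nat.mod_eq_of_lt (by omega)]
      congr 2
      omega
    refine ⟨(i-1) + t - s, ?_⟩
    rw [hs, ← Equiv.Perm.mul_apply, ← pow_add, hσLq]
    have he : (i-1) + t - s + (s - 1) = (t - 1) + (i-1) := by omega
    rw [he, Nat.add_mod_right, Nat.mod_eq_of_lt (by omega)]
    congr 2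
    omega
  have hσUreach : ∀ s t : ℕ, i ≤ s → s ≤ k → i ≤ t → t ≤ k → ∀ ℓ : ℤ,
      ∃ p : ℕ, ((τ*π) ^ p) (a s + ℓ * n) = a t + ℓ * n := by
    intro s t hsi hsk hti htk ℓ
    have hs : a s + ℓ * n = ((τ*π) ^ (s-i)) (a i + ℓ * n) := by
      rw [hσUq, Nat.mod_eq_of_lt (by omega)]
      congr 2
      omega
    refine ⟨(k-i+1) + t - s, ?_⟩
    rw [hs, ← Equiv.Perm.mul_apply, ← pow_add, hσUq]
    have he : (k-i+1) + t - s + (s - i) = (t - i) + (k-i+1) := by omega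
    rw [he, Nat.add_mod_right, Nat.mod_eq_of_lt (by omega)]
    congr 2
    omega
  have hAπz : ∀ j : ℤ, ∀ x : ℤ, (∃ t, 1 ≤ t ∧ t ≤ k ∧ x % n = a t % n) →
      (∃ t, 1 ≤ t ∧ t ≤ k ∧ ((π ^ j) x) % n = a t % n) := by
    intro j
    induction j using Int.induction_on with
    | zero => intro x h; simpa using h
    | succ j ih =>
        intro x h
        rw [show (j:ℤ)+1 = 1+j by ring, zpow_add, zpow_one, Equiv.Perm.mul_apply]
        exact hAfwd _ (ih x h)
    | pred j ih =>
        intro x h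
        rw [show (-(j:ℤ)-1) = (-1)+(-j) by ring, zpow_add, Equiv.Perm.mul_apply, zpow_neg_one]
        have hz := ih x h
        exact hAinv _ (by rw [Equiv.Perm.apply_inv_self]; exact hz)
  -- finiteness transfer
  have hfinF : ∀ x : ℤ, (permOrbit (τ*π) x).Finite →
      ¬ (∃ t, i ≤ t ∧ t ≤ k ∧ x % n = a t % n) → (permOrbit π x).Finite := by
    intro x hx hU
    rcases htri x with h | h | h
    · obtain ⟨t, ht1, hti, hxt⟩ := h
      obtain ⟨ℓ, rfl⟩ := hrep x (a t) hxt
      exact finπA t ht1 (by omega) ℓ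
    · exact absurd h hU
    · rwa [← hOrbEq x h]
  have hfinG : ∀ x : ℤ, (permOrbit π x).Finite →
      ¬ (∃ t, 1 ≤ t ∧ t ≤ k ∧ x % n = a t % n) → (permOrbit (τ*π) x).Finite := by
    intro x hx hA
    rcases htri x with h | h | h
    · obtain ⟨t, h1', h2', h3'⟩ := h
      exact absurd (⟨t, h1', by omega, h3'⟩ : ∃ t, 1 ≤ t ∧ t ≤ k ∧ x % n = a t % n) hA
    · obtain ⟨t, h1', h2', h3'⟩ := h
      exact absurd (⟨t, by omega, h2', h3'⟩ : ∃ t, 1 ≤ t ∧ t ≤ k ∧ x % n = a t % n) hA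
    · rwa [hOrbEq x h]
  have hfina1 : (permOrbit (τ*π) (a 1)).Finite := by
    have h := finσL 1 le_rfl hi1 0
    simpa using h
  have hfinai : (permOrbit (τ*π) (a i)).Finite := by
    have h := finσU i le_rfl hik 0
    simpa using h
  refine ⟨c1, c2, c3, c4, c5, ?_⟩
  haveI instQ2 : Finite (Quot (sameFinCycleClass n π)) := finClassFinite n hn0 π hπ
  show Nat.card (Quot (sameFinCycleClass n (τ * π)))
      = Nat.card (Quot (sameFinCycleClass n π)) + 1
  refine quot_split_count (sameFinCycleClass n (τ*π)) (sameFinCycleClass n π)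
    (fun x => if h : ∃ t, i ≤ t ∧ t ≤ k ∧ x.1 % n = a t % n then Sum.inr Unit.unit
      else Sum.inl (Quot.mk _ ⟨x.1, hfinF x.1 x.2 h⟩))
    ?_
    (fun x => if h : ∃ t, 1 ≤ t ∧ t ≤ k ∧ x.1 % n = a t % n
      then Quot.mk _ ⟨a 1, hfina1⟩
      else Quot.mk _ ⟨x.1, hfinG x.1 x.2 h⟩)
    ?_ ⟨a i, hfinai⟩ ?_ ?_ ?_
  · -- hF
    intro x y hxy
    by_cases hx : ∃ t, i ≤ t ∧ t ≤ k ∧ x.1 % n = a t % n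
    · have hy : ∃ t, i ≤ t ∧ t ≤ k ∧ y.1 % n = a t % n := by
        obtain ⟨j, m, hj⟩ := hxy
        obtain ⟨t, hti, htk, ht⟩ := hUz j x.1 hx
        rw [hj, hmod] at ht
        exact ⟨t, hti, htk, ht⟩
      rw [dif_pos hx, dif_pos hy]
    · have hy : ¬ ∃ t, i ≤ t ∧ t ≤ k ∧ y.1 % n = a t % n := by
        intro hyU
        obtain ⟨j, m, hj⟩ := same_symm n (τ*π) hσper hxy
        obtain ⟨t, hti, htk, ht⟩ := hUz j y.1 hyU
        rw [hj, hmod] at ht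
        exact hx ⟨t, hti, htk, ht⟩
      rw [dif_neg hx, dif_neg hy]
      congr 1
      apply Quot.sound
      rcases htri x.1 with h | h | h
      · obtain ⟨j, m, hj⟩ := hxy
        obtain ⟨t, ht1, hti, ht⟩ := hLz j x.1 h
        rw [hj, hmod] at ht
        obtain ⟨s0, hs1, hsi, hxs⟩ := h
        obtain ⟨ℓ, hxe⟩ := hrep x.1 (a s0) hxs
        obtain ⟨ℓ', hye⟩ := hrep y.1 (a t) ht
        obtain ⟨p, hp⟩ := hπreach s0 t hs1 (by omega) ht1 (by omega) ℓ
        refine ⟨(p:ℤ), ℓ - ℓ', ?_⟩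
        rw [zpow_natCast, hxe, hp, hye]
        ring
      · exact absurd h hx
      · obtain ⟨j, m, hj⟩ := hxy
        exact ⟨j, m, by rw [← (hBz j x.1 h).1]; exact hj⟩
  · -- hG
    intro x y hxy
    by_cases hx : ∃ t, 1 ≤ t ∧ t ≤ k ∧ x.1 % n = a t % n
    · have hy : ∃ t, 1 ≤ t ∧ t ≤ k ∧ y.1 % n = a t % n := by
        obtain ⟨j, m, hj⟩ := hxy
        obtain ⟨t, ht1, htk, ht⟩ := hAπz j x.1 hx
        rw [hj, hmod] at ht
        exact ⟨t, ht1, htk, ht⟩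
      rw [dif_pos hx, dif_pos hy]
    · have hy : ¬ ∃ t, 1 ≤ t ∧ t ≤ k ∧ y.1 % n = a t % n := by
        intro hyA
        obtain ⟨j, m, hj⟩ := same_symm n π hπ hxy
        obtain ⟨t, ht1, htk, ht⟩ := hAπz j y.1 hyA
        rw [hj, hmod] at ht
        exact hx ⟨t, ht1, htk, ht⟩
      rw [dif_neg hx, dif_neg hy]
      apply Quot.sound
      obtain ⟨j, m, hj⟩ := hxy
      have hBx : ∀ t, 1 ≤ t → t ≤ k → ¬ x.1 % n = a t % n := by
        push_neg at hx
        exact hx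
      exact ⟨j, m, by rw [(hBz j x.1 hBx).1]; exact hj⟩
  · -- h1
    intro x
    by_cases hx : ∃ t, i ≤ t ∧ t ≤ k ∧ x.1 % n = a t % n
    · rw [dif_pos hx]
      simp only [Sum.elim_inr]
      apply Quot.sound
      obtain ⟨t, hti, htk, hxt⟩ := hx
      obtain ⟨ℓ, hxe⟩ := hrep x.1 (a t) hxt
      obtain ⟨p, hp⟩ := hσUreach i t le_rfl hik hti htk 0
      simp only [zero_mul, add_zero] at hp
      exact ⟨(p:ℤ), -ℓ, by rw [zpow_natCast, hp, hxe]; ring⟩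
    · rw [dif_neg hx]
      simp only [Sum.elim_inl]
      by_cases hx2 : ∃ t, 1 ≤ t ∧ t ≤ k ∧ x.1 % n = a t % n
      · rw [dif_pos hx2]
        apply Quot.sound
        obtain ⟨t, ht1, htk, hxt⟩ := hx2
        have hti : t < i := by
          by_contra hc
          exact hx ⟨t, by omega, htk, hxt⟩
        obtain ⟨ℓ, hxe⟩ := hrep x.1 (a t) hxt
        obtain ⟨p, hp⟩ := hσLreach 1 t le_rfl hi1 ht1 hti 0
        simp only [zero_mul, add_zero] at hp
        exact ⟨(p:ℤ), -ℓ, by rw [zpow_natCast, hp, hxe]; ring⟩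
      · rw [dif_neg hx2]
  · -- h2
    intro y
    by_cases hy : ∃ t, 1 ≤ t ∧ t ≤ k ∧ y.1 % n = a t % n
    · refine ⟨⟨a 1, hfina1⟩, ?_, ?_⟩
      · rw [dif_pos hy]
      · have hU1 : ¬ ∃ t, i ≤ t ∧ t ≤ k ∧ (a 1) % n = a t % n := by
          rintro ⟨t, hti, htk, ht⟩
          exact hdist 1 t le_rfl hk (by omega) htk (by omega) ht
        dsimp only
        rw [dif_neg hU1]
        congr 1
        apply Quot.sound
        obtain ⟨t, ht1, htk, hyt⟩ := hy
        obtain ⟨ℓ, hye⟩ := hrep y.1 (a t) hyt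
        obtain ⟨p, hp⟩ := hπreach 1 t le_rfl hk ht1 htk 0
        simp only [zero_mul, add_zero] at hp
        exact ⟨(p:ℤ), -ℓ, by rw [zpow_natCast, hp, hye]; ring⟩
    · refine ⟨⟨y.1, hfinG y.1 y.2 hy⟩, ?_, ?_⟩
      · rw [dif_neg hy]
      · have hyU : ¬ ∃ t, i ≤ t ∧ t ≤ k ∧ y.1 % n = a t % n := by
          rintro ⟨t, hti, htk, ht⟩
          exact hy ⟨t, by omega, htk, ht⟩
        dsimp only
        rw [dif_neg hyU]
  · -- h3
    dsimp only
    rw [dif_pos (⟨i, le_rfl, hik, rfl⟩ : ∃ t, i ≤ t ∧ t ≤ k ∧ (a i) % n = a t % n)]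
end

section
/- Let π be a periodic permutation of ℤ with no finite cycles whose infinite cycles are exactly one increasing cycle (⋯ a₁ ⋯ a_k a₁+n ⋯) and one decreasing cycle (⋯ b₁ ⋯ b_m b₁−n ⋯), and let τ = (a₁ b₁)_n. Then τπ has a finite cycle containing the sequence a₁, ..., a_k, b₁+n, ..., b_m+n, returning to a₁, and τπ has no infinite cycles. -/
/-- Let `π` be a periodic permutation of `ℤ` with no finite cycles, whose
infinite cycles are exactly one increasing cycle `(⋯ a₁ ⋯ a_k a₁+n ⋯)` and one decreasing
cycle `(⋯ b₁ ⋯ b_m b₁−n ⋯)` (the residues of the `aₜ` and `bₜ` being pairwise distinct and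
covering all residues mod `n`), and let `τ = (a₁ b₁)_n`.  Then `τπ` has a finite cycle
running through `a₁, …, a_k, b₁+n, …, b_m+n` and back to `a₁`, and `τπ` has no infinite
cycles. -/
theorem merge_two_infinite_cycles
    (n : ℤ) (hn : 2 ≤ n) (π : Equiv.Perm ℤ)
    (hπ : ∀ x : ℤ, π (x + n) = π x + n)
    (k m : ℕ) (a b : ℕ → ℤ) (hk : 1 ≤ k) (hm : 1 ≤ m)
    (hdistA : ∀ s t : ℕ, 1 ≤ s → s ≤ k → 1 ≤ t → t ≤ k → s ≠ t → ¬ a s % n = a t % n)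
    (hdistB : ∀ s t : ℕ, 1 ≤ s → s ≤ m → 1 ≤ t → t ≤ m → s ≠ t → ¬ b s % n = b t % n)
    (hdistAB : ∀ s t : ℕ, 1 ≤ s → s ≤ k → 1 ≤ t → t ≤ m → ¬ a s % n = b t % n)
    (hcover : ∀ x : ℤ, (∃ t : ℕ, 1 ≤ t ∧ t ≤ k ∧ x % n = a t % n) ∨
                       (∃ t : ℕ, 1 ≤ t ∧ t ≤ m ∧ x % n = b t % n))
    (hcycA : ∀ t : ℕ, 1 ≤ t → t < k → ∀ ℓ : ℤ, π (a t + ℓ * n) = a (t + 1) + ℓ * n)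
    (hcycA2 : ∀ ℓ : ℤ, π (a k + ℓ * n) = a 1 + (ℓ + 1) * n)
    (hcycB : ∀ t : ℕ, 1 ≤ t → t < m → ∀ ℓ : ℤ, π (b t + ℓ * n) = b (t + 1) + ℓ * n)
    (hcycB2 : ∀ ℓ : ℤ, π (b m + ℓ * n) = b 1 + (ℓ - 1) * n)
    (τ : Equiv.Perm ℤ) (hτ : τ = reflN n (a 1) (b 1)) :
    (∀ t : ℕ, 1 ≤ t → t < k → ∀ ℓ : ℤ, (τ * π) (a t + ℓ * n) = a (t + 1) + ℓ * n) ∧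
    (∀ ℓ : ℤ, (τ * π) (a k + ℓ * n) = b 1 + (ℓ + 1) * n) ∧
    (∀ t : ℕ, 1 ≤ t → t < m → ∀ ℓ : ℤ, (τ * π) (b t + ℓ * n) = b (t + 1) + ℓ * n) ∧
    (∀ ℓ : ℤ, (τ * π) (b m + ℓ * n) = a 1 + (ℓ - 1) * n) ∧
    (∀ x : ℤ, (permOrbit (τ * π) x).Finite) := by
  have h1 : ¬ a 1 % n = b 1 % n := hdistAB 1 1 le_rfl hk le_rfl hm
  have hτ' : ∀ x : ℤ, τ x = x + (if x % n = a 1 % n then b 1 - a 1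
      else if x % n = b 1 % n then a 1 - b 1 else 0) := by
    intro x
    rw [hτ, reflN, dif_neg h1]
    rfl
  have hres : ∀ (c ℓ : ℤ), (c + ℓ * n) % n = c % n := fun c ℓ => Int.add_mul_emod_self_right c ℓ n
  have p1 : ∀ t : ℕ, 1 ≤ t → t < k → ∀ ℓ : ℤ, (τ * π) (a t + ℓ * n) = a (t + 1) + ℓ * n := by
    intro t ht1 htk ℓ
    have hna : ¬ a (t+1) % n = a 1 % n := hdistA (t+1) 1 (by omega) (by omega) le_rfl hk (by omega)
    have hnb : ¬ a (t+1) % n = b 1 % n := hdistAB (t+1) 1 (by omega) (by omega) le_rfl hm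
    rw [Equiv.Perm.mul_apply, hcycA t ht1 htk ℓ, hτ', hres]
    simp [hna, hnb]
  have p2 : ∀ ℓ : ℤ, (τ * π) (a k + ℓ * n) = b 1 + (ℓ + 1) * n := by
    intro ℓ
    rw [Equiv.Perm.mul_apply, hcycA2 ℓ, hτ', hres, if_pos rfl]
    ring
  have p3 : ∀ t : ℕ, 1 ≤ t → t < m → ∀ ℓ : ℤ, (τ * π) (b t + ℓ * n) = b (t + 1) + ℓ * n := by
    intro t ht1 htm ℓ
    have hnb : ¬ b (t+1) % n = b 1 % n := hdistB (t+1) 1 (by omega) (by omega) le_rfl hm (by omega)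
    have hna : ¬ b (t+1) % n = a 1 % n := fun h =>
      hdistAB 1 (t+1) le_rfl hk (by omega) (by omega) h.symm
    rw [Equiv.Perm.mul_apply, hcycB t ht1 htm ℓ, hτ', hres]
    simp [hna, hnb]
  have p4 : ∀ ℓ : ℤ, (τ * π) (b m + ℓ * n) = a 1 + (ℓ - 1) * n := by
    intro ℓ
    have hba : ¬ b 1 % n = a 1 % n := fun h => h1 h.symm
    rw [Equiv.Perm.mul_apply, hcycB2 ℓ, hτ', hres, if_neg hba, if_pos rfl]
    ring
  refine ⟨p1, p2, p3, p4, ?_⟩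
  intro x
  have hform : ∃ ℓ : ℤ, (∃ t, 1 ≤ t ∧ t ≤ k ∧ x = a t + ℓ * n) ∨
      (∃ t, 1 ≤ t ∧ t ≤ m ∧ x = b t + (ℓ + 1) * n) := by
    rcases hcover x with ⟨t, ht1, htk, hx⟩ | ⟨t, ht1, htm, hx⟩
    · obtain ⟨c, hc⟩ : n ∣ a t - x := (Int.ModEq.dvd hx)
      exact ⟨-c, Or.inl ⟨t, ht1, htk, by linear_combination -hc⟩⟩
    · obtain ⟨c, hc⟩ : n ∣ b t - x := (Int.ModEq.dvd hx)
      exact ⟨-c - 1, Or.inr ⟨t, ht1, htm, by linear_combination -hc⟩⟩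
  obtain ⟨ℓ, hx⟩ := hform
  set σ := τ * π with hσ
  set S : Set ℤ := ((fun t => a t + ℓ * n) '' (Set.Icc 1 k)) ∪
      ((fun t => b t + (ℓ + 1) * n) '' (Set.Icc 1 m)) with hS
  have hSfin : S.Finite := ((Set.finite_Icc 1 k).image _).union ((Set.finite_Icc 1 m).image _)
  have hmaps : Set.MapsTo σ S S := by
    rintro y (⟨t, ⟨ht1, htk⟩, rfl⟩ | ⟨t, ⟨ht1, htm⟩, rfl⟩)
    · rcases htk.lt_or_eq with hlt | rfl
      · rw [hσ, p1 t ht1 hlt ℓ]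
        exact Or.inl ⟨t + 1, ⟨by omega, by omega⟩, rfl⟩
      · rw [hσ, p2 ℓ]
        exact Or.inr ⟨1, ⟨le_rfl, hm⟩, rfl⟩
    · rcases htm.lt_or_eq with hlt | rfl
      · rw [hσ, p3 t ht1 hlt (ℓ + 1)]
        exact Or.inr ⟨t + 1, ⟨by omega, by omega⟩, rfl⟩
      · rw [hσ, p4 (ℓ + 1), show ℓ + 1 - 1 = ℓ by ring]
        exact Or.inl ⟨1, ⟨le_rfl, hk⟩, rfl⟩
  have hbij : Set.BijOn σ S S :=
    (hSfin.injOn_iff_bijOn_of_mapsTo hmaps).mp (σ.injective.injOn)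
  have hinv : ∀ y ∈ S, σ⁻¹ y ∈ S := by
    intro y hy
    obtain ⟨z, hz, hzy⟩ := hbij.surjOn hy
    rw [← hzy]
    simpa using hz
  have hxS : x ∈ S := by
    rcases hx with ⟨t, ht1, htk, rfl⟩ | ⟨t, ht1, htm, rfl⟩
    · exact Or.inl ⟨t, ⟨ht1, htk⟩, rfl⟩
    · exact Or.inr ⟨t, ⟨ht1, htm⟩, rfl⟩
  have horb : ∀ j : ℤ, (σ ^ j) x ∈ S := by
    intro j
    induction j using Int.induction_on with
    | zero => simpa using hxS
    | succ j ih =>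
      rw [show (j : ℤ) + 1 = 1 + j by ring, zpow_add, zpow_one, Equiv.Perm.mul_apply]
      exact hmaps ih
    | pred j ih =>
      rw [show -(j : ℤ) - 1 = -1 + -j by ring, zpow_add, zpow_neg_one, Equiv.Perm.mul_apply]
      exact hinv _ ih
  exact hSfin.subset (by rintro y ⟨j, rfl⟩; exact horb j)
end
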